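/- arXiv:2309.00060 — 6 statements merged into one kernel-verified Lean document; each statement's English description precedes it below -/
import Mathlib

section
/- Under any stationary distribution π of the greedy limited-access chain, the following identity holds: E_π[(λ − d·x_d)²] = (d/n)·λ·E_π[A_d(X)] + λ·E_π[(1 − A_d(X))·(λ − d·x_d)], where x_d = X_d/n. (Lemma 1, equation (8).) -/
open Finset

/-- `busy d X` is the number of busy servers in state `X`, where `X i`
(for `1 ≤ i ≤ d`) is the number of jobs being processed on `i` servers
simultaneously (coordinate `0` is unused). -/
def busy (d : ℕ) (X : Fin (d + 1) → ℕ) : ℕ :=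
  ∑ i : Fin (d + 1), i.1 * X i

/-- The finite state space `S`: coordinate `0` is zero and at most `n` servers busy. -/
def stateSpace (n d : ℕ) : Finset (Fin (d + 1) → ℕ) :=
  (Fintype.piFinset fun _ : Fin (d + 1) => Finset.range (n + 1)).filter
    fun X => busy d X ≤ n ∧ X 0 = 0

/-- Expectation of `g` under a measure `π` supported on the state space. -/
noncomputable def expec (n d : ℕ) (π g : (Fin (d + 1) → ℕ) → ℝ) : ℝ :=
  ∑ X ∈ stateSpace n d, π X * g X

/-- `π` is a probability distribution on the state space. -/
def IsProbOn (n d : ℕ) (π : (Fin (d + 1) → ℕ) → ℝ) : Prop :=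
  (∀ X, 0 ≤ π X) ∧ (∑ X ∈ stateSpace n d, π X = 1) ∧
    ∀ X, X ∉ stateSpace n d → π X = 0

/-- Total number of jobs `∑_{i=1}^d X_i` in state `X`. -/
def jobs (d : ℕ) (X : Fin (d + 1) → ℕ) : ℕ :=
  ∑ i : Fin (d + 1), if 0 < i.1 then X i else 0

/-- Number of jobs occupying fewer than `d` servers, `∑_{i=1}^{d-1} X_i`. -/
def jobsLow (d : ℕ) (X : Fin (d + 1) → ℕ) : ℕ :=
  ∑ i : Fin (d + 1), if 0 < i.1 ∧ i.1 < d then X i else 0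

/-- Sampling probabilities `A_i(X)` for `0 ≤ i ≤ d`: for `i < d`, the hypergeometric
probability `C(I,i)·C(B,k−i)/C(n,k)` that exactly `i` of the `k` uniformly sampled
servers are idle; for `i = d`, the probability `1 − ∑_{j<d} A_j(X)` that at least `d`
sampled servers are idle. -/
noncomputable def Asamp (n d k : ℕ) (X : Fin (d + 1) → ℕ) (i : ℕ) : ℝ :=
  if i < d then
    ((n - busy d X).choose i * (busy d X).choose (k - i) : ℝ) / (n.choose k : ℝ)
  else
    1 - ∑ j ∈ Finset.range d,
        ((n - busy d X).choose j * (busy d X).choose (k - j) : ℝ) / (n.choose k : ℝ)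

/-- Generator of the greedy limited-access chain:
`G f(X) = nλ·∑_{i=1}^d A_i(X)·(f(X+e_i) − f(X)) + ∑_{i=1}^d i·X_i·(f(X−e_i) − f(X))`. -/
noncomputable def Glim (n d k : ℕ) (lam : ℝ) (f : (Fin (d + 1) → ℕ) → ℝ)
    (X : Fin (d + 1) → ℕ) : ℝ :=
  (n : ℝ) * lam * ∑ i : Fin (d + 1),
      (if i.1 = 0 then 0 else Asamp n d k X i.1) * (f (X + Pi.single i 1) - f X) +
    ∑ i : Fin (d + 1), (i.1 * X i : ℝ) * (f (X - Pi.single i 1) - f X)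

/-- `π` is a stationary distribution of the greedy limited-access chain. -/
def IsStationaryLim (n d k : ℕ) (lam : ℝ) (π : (Fin (d + 1) → ℕ) → ℝ) : Prop :=
  ∀ f : (Fin (d + 1) → ℕ) → ℝ, ∑ X ∈ stateSpace n d, π X * Glim n d k lam f X = 0

/-- Generator of the greedy full-access chain (the case `k = n`):
`G f(X) = nλ·[1(I(X) ≥ d)·(f(X+e_d) − f(X)) + ∑_{j=1}^{d−1} 1(I(X) = j)·(f(X+e_j) − f(X))]
  + ∑_{i=1}^d i·X_i·(f(X−e_i) − f(X))`, where `I(X) = n − busy d X`. -/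
noncomputable def Gfull (n d : ℕ) (lam : ℝ) (f : (Fin (d + 1) → ℕ) → ℝ)
    (X : Fin (d + 1) → ℕ) : ℝ :=
  (n : ℝ) * lam *
      ((if d ≤ n - busy d X then (1 : ℝ) else 0) *
          (f (X + Pi.single (Fin.last d) 1) - f X) +
        ∑ j : Fin (d + 1),
          (if 0 < j.1 ∧ j.1 < d ∧ n - busy d X = j.1 then (1 : ℝ) else 0) *
            (f (X + Pi.single j 1) - f X)) +
    ∑ i : Fin (d + 1), (i.1 * X i : ℝ) * (f (X - Pi.single i 1) - f X)

/-- `π` is a stationary distribution of the greedy full-access chain. -/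
def IsStationaryFull (n d : ℕ) (lam : ℝ) (π : (Fin (d + 1) → ℕ) → ℝ) : Prop :=
  ∀ f : (Fin (d + 1) → ℕ) → ℝ, ∑ X ∈ stateSpace n d, π X * Gfull n d lam f X = 0


lemma glim_eval (n d k : ℕ) (hd : 1 ≤ d) (lam : ℝ) (g : ℕ → ℝ)
    (X : Fin (d + 1) → ℕ) :
    Glim n d k lam (fun Y => g (Y (Fin.last d))) X =
      (n : ℝ) * lam * (Asamp n d k X d *
        (g (X (Fin.last d) + 1) - g (X (Fin.last d)))) +
      (d : ℝ) * (X (Fin.last d) : ℝ) *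
        (g (X (Fin.last d) - 1) - g (X (Fin.last d))) := by
  unfold Glim
  have hs1 : (∑ i : Fin (d + 1),
      (if i.1 = 0 then 0 else Asamp n d k X i.1) *
        (g (((X + Pi.single i 1 : Fin (d+1) → ℕ) (Fin.last d))) - g (X (Fin.last d)))) =
      Asamp n d k X d * (g (X (Fin.last d) + 1) - g (X (Fin.last d))) := by
    rw [Fintype.sum_eq_single (Fin.last d)]
    · have hne : ¬ ((Fin.last d).1 = 0) := by simp [Fin.last]; omega
      have hadd : ((X + Pi.single (Fin.last d) 1 : Fin (d+1) → ℕ) (Fin.last d))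
          = X (Fin.last d) + 1 := by simp
      rw [hadd, if_neg hne]
      simp [Fin.last]
    · intro b hb
      have hadd : ((X + Pi.single b 1 : Fin (d+1) → ℕ) (Fin.last d)) = X (Fin.last d) := by
        simp [Pi.single_apply, (Ne.symm hb)]
      rw [hadd, sub_self, mul_zero]
  have hs2 : (∑ i : Fin (d + 1),
      ((i.1 : ℝ) * (X i : ℝ)) *
        (g (((X - Pi.single i 1 : Fin (d+1) → ℕ) (Fin.last d))) - g (X (Fin.last d)))) =
      (d : ℝ) * (X (Fin.last d) : ℝ) *
        (g (X (Fin.last d) - 1) - g (X (Fin.last d))) := by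
    rw [Fintype.sum_eq_single (Fin.last d)]
    · have hsub : ((X - Pi.single (Fin.last d) 1 : Fin (d+1) → ℕ) (Fin.last d))
          = X (Fin.last d) - 1 := by simp
      rw [hsub]
      simp [Fin.last]
    · intro b hb
      have hsub : ((X - Pi.single b 1 : Fin (d+1) → ℕ) (Fin.last d)) = X (Fin.last d) := by
        simp [Pi.single_apply, (Ne.symm hb)]
      rw [hsub, sub_self, mul_zero]
  rw [hs1, hs2]

lemma glim_eval1 (n d k : ℕ) (hd : 1 ≤ d) (lam : ℝ) (X : Fin (d + 1) → ℕ) :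
    Glim n d k lam (fun Y => ((Y (Fin.last d) : ℝ))) X =
      (n : ℝ) * lam * Asamp n d k X d - (d : ℝ) * (X (Fin.last d) : ℝ) := by
  refine Eq.trans (glim_eval n d k hd lam (fun m => (m : ℝ)) X) ?_
  rcases Nat.eq_zero_or_pos (X (Fin.last d)) with h | h
  · rw [h]; push_cast; ring
  · have hc : (((X (Fin.last d)) - 1 : ℕ) : ℝ) = (X (Fin.last d) : ℝ) - 1 := by
      rw [Nat.cast_sub h]; norm_num
    rw [hc]; push_cast; ring

lemma glim_eval2 (n d k : ℕ) (hd : 1 ≤ d) (lam : ℝ) (X : Fin (d + 1) → ℕ) :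
    Glim n d k lam (fun Y => (lam - d * (Y (Fin.last d) : ℝ) / n) ^ 2) X =
      (n : ℝ) * lam * (Asamp n d k X d *
        ((lam - d * ((X (Fin.last d) : ℝ) + 1) / n) ^ 2 -
          (lam - d * (X (Fin.last d) : ℝ) / n) ^ 2)) +
      (d : ℝ) * (X (Fin.last d) : ℝ) *
        ((lam - d * ((X (Fin.last d) : ℝ) - 1) / n) ^ 2 -
          (lam - d * (X (Fin.last d) : ℝ) / n) ^ 2) := by
  refine Eq.trans
    (glim_eval n d k hd lam (fun m => (lam - d * (m : ℝ) / n) ^ 2) X) ?_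
  rcases Nat.eq_zero_or_pos (X (Fin.last d)) with h | h
  · rw [h]; push_cast; ring
  · have hc : (((X (Fin.last d)) - 1 : ℕ) : ℝ) = (X (Fin.last d) : ℝ) - 1 := by
      rw [Nat.cast_sub h]; norm_num
    rw [hc]; push_cast; ring

/-- Lemma 1, equation (8): under any stationary distribution `π` of the greedy
limited-access chain,
`E[(λ − d·x_d)²] = (d/n)·λ·E[A_d(X)] + λ·E[(1 − A_d(X))·(λ − d·x_d)]`. -/
theorem stmt0 (n d k : ℕ) (hd : 1 ≤ d) (hdk : d ≤ k) (hkn : k ≤ n) (lam : ℝ)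
    (hlam0 : 0 ≤ lam) (hlam1 : lam ≤ 1) (π : (Fin (d + 1) → ℕ) → ℝ)
    (hprob : IsProbOn n d π) (hstat : IsStationaryLim n d k lam π) :
    expec n d π (fun X => (lam - d * (X (Fin.last d) : ℝ) / n) ^ 2) =
      (d / n) * lam * expec n d π (fun X => Asamp n d k X d) +
        lam * expec n d π
          (fun X => (1 - Asamp n d k X d) * (lam - d * (X (Fin.last d) : ℝ) / n)) := by
  have hn : 1 ≤ n := hd.trans (hdk.trans hkn)
  have hnR : (n : ℝ) ≠ 0 := Nat.cast_ne_zero.mpr (by omega)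
  have hdR : (d : ℝ) ≠ 0 := Nat.cast_ne_zero.mpr (by omega)
  have h1 := hstat (fun Y => ((Y (Fin.last d) : ℝ)))
  have h2 := hstat (fun Y => (lam - d * (Y (Fin.last d) : ℝ) / n) ^ 2)
  unfold expec
  have key : ∀ X ∈ stateSpace n d,
      π X * (lam - d * (X (Fin.last d) : ℝ) / n) ^ 2 =
        (d / n) * lam * (π X * Asamp n d k X d) +
        lam * (π X * ((1 - Asamp n d k X d) *
          (lam - d * (X (Fin.last d) : ℝ) / n))) +
        (-(1 / (2 * d))) *
          (π X * Glim n d k lam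
            (fun Y => (lam - d * (Y (Fin.last d) : ℝ) / n) ^ 2) X) +
        (-(d / (2 * n ^ 2))) *
          (π X * Glim n d k lam (fun Y => ((Y (Fin.last d) : ℝ))) X) := by
    intro X _
    rw [glim_eval1 n d k hd lam X, glim_eval2 n d k hd lam X]
    field_simp
    ring
  rw [Finset.sum_congr rfl key, Finset.sum_add_distrib, Finset.sum_add_distrib,
    Finset.sum_add_distrib, ← Finset.mul_sum, ← Finset.mul_sum, ← Finset.mul_sum,
    ← Finset.mul_sum, h1, h2]
  ring
end

section
/- Under any stationary distribution π of the greedy full-access chain, the following identity holds: E_π[(λ − d·x_d)²] = (d/n)·λ·E_π[1(I(X) ≥ d)] + λ·E_π[1(I(X) ≤ d−1)·(λ − d·x_d)], where x_d = X_d/n and the event I(X) ≤ d−1 is the same as q_1 > 1 − d/n. (Lemma 1, equation (9), specialization k = n.) -/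
open Finset

/-- The generator applied to a function of the last coordinate only. -/
lemma Gfull_last (n d : ℕ) (lam : ℝ) (h : ℕ → ℝ) (X : Fin (d + 1) → ℕ) :
    Gfull n d lam (fun Y => h (Y (Fin.last d))) X =
      (n : ℝ) * lam * ((if d ≤ n - busy d X then (1 : ℝ) else 0) *
        (h (X (Fin.last d) + 1) - h (X (Fin.last d)))) +
      (d : ℝ) * (X (Fin.last d) : ℝ) *
        (h (X (Fin.last d) - 1) - h (X (Fin.last d))) := by
  have hadd : (X + Pi.single (Fin.last d) 1 : Fin (d + 1) → ℕ) (Fin.last d)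
      = X (Fin.last d) + 1 := by simp
  have hsub : (X - Pi.single (Fin.last d) 1 : Fin (d + 1) → ℕ) (Fin.last d)
      = X (Fin.last d) - 1 := by simp [Pi.sub_apply]
  simp only [Gfull]
  have h2 : ∑ j : Fin (d + 1),
      (if 0 < j.1 ∧ j.1 < d ∧ n - busy d X = j.1 then (1 : ℝ) else 0) *
        (h ((X + Pi.single j 1 : Fin (d + 1) → ℕ) (Fin.last d)) - h (X (Fin.last d))) = 0 := by
    apply Finset.sum_eq_zero
    intro j _
    by_cases hc : 0 < j.1 ∧ j.1 < d ∧ n - busy d X = j.1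
    · have hne : Fin.last d ≠ j := by
        intro e
        have := hc.2.1
        rw [← e, Fin.val_last] at this
        exact lt_irrefl _ this
      rw [if_pos hc, Pi.add_apply, Pi.single_eq_of_ne hne, Nat.add_zero]
      simp
    · rw [if_neg hc, zero_mul]
  have h3 : ∑ i : Fin (d + 1), (i.1 * X i : ℝ) *
      (h ((X - Pi.single i 1 : Fin (d + 1) → ℕ) (Fin.last d)) - h (X (Fin.last d))) =
      (d : ℝ) * (X (Fin.last d) : ℝ) *
        (h (X (Fin.last d) - 1) - h (X (Fin.last d))) := by
    rw [Finset.sum_eq_single (Fin.last d)]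
    · rw [hsub, Fin.val_last]
    · intro i _ hne
      have hz : (X - Pi.single i 1 : Fin (d + 1) → ℕ) (Fin.last d) = X (Fin.last d) := by
        rw [Pi.sub_apply, Pi.single_eq_of_ne hne.symm, Nat.sub_zero]
      rw [hz, sub_self, mul_zero]
    · intro habs; exact absurd (Finset.mem_univ _) habs
  rw [h2, h3, hadd]
  ring

/-- Cast helper for the downward difference of a linear function. -/
lemma down_lin (m : ℕ) : (m : ℝ) * (((m - 1 : ℕ) : ℝ) - (m : ℝ)) = -(m : ℝ) := by
  cases m with
  | zero => simp
  | succ k => push_cast [Nat.succ_sub_one]; ring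

/-- Cast helper for the downward difference of a square. -/
lemma down_sq (m : ℕ) :
    (m : ℝ) * (((m - 1 : ℕ) : ℝ) ^ 2 - (m : ℝ) ^ 2) = (m : ℝ) * (-2 * (m : ℝ) + 1) := by
  cases m with
  | zero => simp
  | succ k => push_cast [Nat.succ_sub_one]; ring

/-- Lemma 1, equation (9) (case `k = n`): under any stationary distribution `π` of the
greedy full-access chain,
`E[(λ − d·x_d)²] = (d/n)·λ·E[1(I(X) ≥ d)] + λ·E[1(I(X) ≤ d−1)·(λ − d·x_d)]`. -/
theorem stmt1 (n d : ℕ) (hn : 1 ≤ n) (hd : 1 ≤ d) (hdn : d ≤ n) (lam : ℝ)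
    (hlam0 : 0 ≤ lam) (hlam1 : lam ≤ 1) (π : (Fin (d + 1) → ℕ) → ℝ)
    (hprob : IsProbOn n d π) (hstat : IsStationaryFull n d lam π) :
    expec n d π (fun X => (lam - d * (X (Fin.last d) : ℝ) / n) ^ 2) =
      (d / n) * lam *
          expec n d π (fun X => if d ≤ n - busy d X then (1 : ℝ) else 0) +
        lam * expec n d π
          (fun X => (if n - busy d X ≤ d - 1 then (1 : ℝ) else 0) *
            (lam - d * (X (Fin.last d) : ℝ) / n)) := by
  have hn0 : (0 : ℝ) < n := by exact_mod_cast hn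
  have hne : (n : ℝ) ≠ 0 := ne_of_gt hn0
  have H1 : ∑ X ∈ stateSpace n d, π X *
      ((n : ℝ) * lam * (if d ≤ n - busy d X then (1 : ℝ) else 0)
        - (d : ℝ) * (X (Fin.last d) : ℝ)) = 0 := by
    refine (Finset.sum_congr rfl fun X _ => ?_).trans
      (hstat (fun Y => (Y (Fin.last d) : ℝ)))
    rw [Gfull_last n d lam (fun m => (m : ℝ)) X]
    have hd1 := down_lin (X (Fin.last d))
    push_cast
    linear_combination (-(π X) * (d : ℝ)) * hd1
  have H2 : ∑ X ∈ stateSpace n d, π X *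
      ((n : ℝ) * lam * (if d ≤ n - busy d X then (1 : ℝ) else 0) *
          (2 * (X (Fin.last d) : ℝ) + 1)
        + (d : ℝ) * (X (Fin.last d) : ℝ) * (-2 * (X (Fin.last d) : ℝ) + 1)) = 0 := by
    refine (Finset.sum_congr rfl fun X _ => ?_).trans
      (hstat (fun Y => (Y (Fin.last d) : ℝ) ^ 2))
    rw [Gfull_last n d lam (fun m => (m : ℝ) ^ 2) X]
    have hd1 := down_sq (X (Fin.last d))
    push_cast
    linear_combination (-(π X) * (d : ℝ)) * hd1
  simp only [expec]
  rw [Finset.mul_sum, Finset.mul_sum, ← Finset.sum_add_distrib, ← sub_eq_zero,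
    ← Finset.sum_sub_distrib]
  have key : ∀ X ∈ stateSpace n d,
      π X * (lam - ↑d * (X (Fin.last d) : ℝ) / ↑n) ^ 2 -
        (↑d / ↑n * lam * (π X * (if d ≤ n - busy d X then (1 : ℝ) else 0)) +
          lam * (π X * ((if n - busy d X ≤ d - 1 then (1 : ℝ) else 0) *
            (lam - ↑d * (X (Fin.last d) : ℝ) / ↑n)))) =
      (lam / n - d / (2 * n ^ 2)) * (π X *
        ((n : ℝ) * lam * (if d ≤ n - busy d X then (1 : ℝ) else 0)
          - (d : ℝ) * (X (Fin.last d) : ℝ))) +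
      (-(d / (2 * n ^ 2))) * (π X *
        ((n : ℝ) * lam * (if d ≤ n - busy d X then (1 : ℝ) else 0) *
            (2 * (X (Fin.last d) : ℝ) + 1)
          + (d : ℝ) * (X (Fin.last d) : ℝ) * (-2 * (X (Fin.last d) : ℝ) + 1))) := by
    intro X _
    by_cases hI : d ≤ n - busy d X
    · rw [if_pos hI, if_neg (by omega)]
      field_simp
      ring
    · rw [if_neg hI, if_pos (by omega)]
      field_simp
      ring
  rw [Finset.sum_congr rfl key, Finset.sum_add_distrib, ← Finset.mul_sum, ← Finset.mul_sum,
    H1, H2, mul_zero, mul_zero, add_zero]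
end

section
/- Let C ⊆ S be the set consisting of all states X with X_i = 0 for every 1 ≤ i ≤ d−1, together with all states X for which there exists 1 ≤ j ≤ d−1 with X_j = 1, X_i = 0 for every i ∈ {1,…,d−1}\{j}, and d divides I(X). Then C is invariant under the greedy full-access chain: for every X ∈ C, each state reachable from X by a single transition of positive rate (namely X+e_d if I(X) ≥ d, X+e_j if I(X) = j for some 1 ≤ j ≤ d−1, and X−e_i if X_i ≥ 1) again belongs to C. In particular, every trajectory started from a state with Σ_{i=1}^{d−1} X_i = 0 satisfies Σ_{i=1}^{d−1} X_i ≤ 1 at all times. (Lemma 2, first part.) -/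
open Finset

/-- Single positive-rate transitions of the greedy full-access chain:
`X → X + e_d` if `I(X) ≥ d`, `X → X + e_j` if `I(X) = j` for some `1 ≤ j ≤ d−1`,
and `X → X − e_i` if `X_i ≥ 1`. -/
def step (n d : ℕ) (X Y : Fin (d + 1) → ℕ) : Prop :=
  (d ≤ n - busy d X ∧ Y = X + Pi.single (Fin.last d) 1) ∨
    (∃ j : Fin (d + 1), 0 < j.1 ∧ j.1 < d ∧ n - busy d X = j.1 ∧
      Y = X + Pi.single j 1) ∨
    (∃ i : Fin (d + 1), 0 < i.1 ∧ 1 ≤ X i ∧ Y = X - Pi.single i 1)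

/-- The set `C`: either `X_i = 0` for all `1 ≤ i ≤ d−1`, or there is `1 ≤ j ≤ d−1` with
`X_j = 1`, `X_i = 0` for every other `1 ≤ i ≤ d−1`, and `d` divides `I(X)`. -/
def Cset (n d : ℕ) (X : Fin (d + 1) → ℕ) : Prop :=
  (∀ i : Fin (d + 1), 0 < i.1 → i.1 < d → X i = 0) ∨
    ∃ j : Fin (d + 1), 0 < j.1 ∧ j.1 < d ∧ X j = 1 ∧
      (∀ i : Fin (d + 1), 0 < i.1 → i.1 < d → i ≠ j → X i = 0) ∧
      d ∣ (n - busy d X)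

lemma busy_add (d : ℕ) (X : Fin (d + 1) → ℕ) (i : Fin (d + 1)) :
    busy d (X + Pi.single i 1) = busy d X + i.1 := by
  unfold busy
  simp only [Pi.add_apply, mul_add, Finset.sum_add_distrib]
  congr 1
  rw [Fintype.sum_eq_single i (fun j hj => by rw [Pi.single_eq_of_ne hj, mul_zero])]
  simp

lemma busy_sub (d : ℕ) (X : Fin (d + 1) → ℕ) (i : Fin (d + 1)) (h : 1 ≤ X i) :
    busy d X = busy d (X - Pi.single i 1) + i.1 := by
  have hX : (X - Pi.single i 1) + Pi.single i 1 = X := by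
    funext m
    by_cases hm : m = i
    · subst hm; simp [Nat.sub_add_cancel h]
    · simp [Pi.single_eq_of_ne hm]
  conv_lhs => rw [← hX]
  exact busy_add d _ i

lemma mem_stateSpace_iff (n d : ℕ) (X : Fin (d + 1) → ℕ) :
    X ∈ stateSpace n d ↔ (∀ i, X i ≤ n) ∧ busy d X ≤ n ∧ X 0 = 0 := by
  simp only [stateSpace, Finset.mem_filter, Fintype.mem_piFinset, Finset.mem_range,
    Nat.lt_succ_iff]

lemma coord_le_busy (d : ℕ) (X : Fin (d + 1) → ℕ) (i : Fin (d + 1)) :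
    i.1 * X i ≤ busy d X := by
  unfold busy
  exact Finset.single_le_sum (f := fun j : Fin (d+1) => j.1 * X j)
    (fun j _ => Nat.zero_le _) (Finset.mem_univ i)

lemma mem_stateSpace_of (n d : ℕ) (X : Fin (d + 1) → ℕ)
    (h1 : busy d X ≤ n) (h2 : X 0 = 0) : X ∈ stateSpace n d := by
  rw [mem_stateSpace_iff]
  refine ⟨fun i => ?_, h1, h2⟩
  rcases Nat.eq_zero_or_pos i.1 with hi | hi
  · have : i = 0 := by ext; simpa using hi
    simp [this, h2]
  · calc X i ≤ i.1 * X i := Nat.le_mul_of_pos_left _ hi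
      _ ≤ busy d X := coord_le_busy d X i
      _ ≤ n := h1

lemma step_mem (n d : ℕ) (hd : 1 ≤ d) (X Y : Fin (d + 1) → ℕ)
    (hX : X ∈ stateSpace n d) (hs : step n d X Y) : Y ∈ stateSpace n d := by
  rw [mem_stateSpace_iff] at hX
  obtain ⟨-, hb, h0⟩ := hX
  rcases hs with ⟨hI, rfl⟩ | ⟨j, hj0, hjd, hI, rfl⟩ | ⟨i, hi0, hXi, rfl⟩
  · refine mem_stateSpace_of n d _ ?_ ?_
    · rw [busy_add]; simp only [Fin.val_last]; omega
    · have : (0 : Fin (d + 1)) ≠ Fin.last d := by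
        intro h; have := congrArg Fin.val h; simp at this; omega
      simp [Pi.single_eq_of_ne this, h0]
  · refine mem_stateSpace_of n d _ ?_ ?_
    · rw [busy_add]; omega
    · have : (0 : Fin (d + 1)) ≠ j := by
        intro h; rw [← h] at hj0; simp at hj0
      simp [Pi.single_eq_of_ne this, h0]
  · refine mem_stateSpace_of n d _ ?_ ?_
    · have := busy_sub d X i hXi; omega
    · simp [h0]

lemma cset_step (n d : ℕ) (hd : 1 ≤ d) (X : Fin (d + 1) → ℕ)
    (hX : X ∈ stateSpace n d) (hC : Cset n d X) :
    ∀ Y, step n d X Y → Cset n d Y := by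
  rw [mem_stateSpace_iff] at hX
  obtain ⟨-, hb, h0⟩ := hX
  intro Y hs
  rcases hs with ⟨hI, rfl⟩ | ⟨j, hj0, hjd, hI, rfl⟩ | ⟨i, hi0, hXi, rfl⟩
  · -- add e_d
    have hcoord : ∀ m : Fin (d + 1), m.1 < d →
        (X + Pi.single (Fin.last d) 1 : Fin (d + 1) → ℕ) m = X m := by
      intro m hm
      have : m ≠ Fin.last d := by
        intro h; rw [h] at hm; simp at hm
      simp [Pi.single_eq_of_ne this]
    have hbY : busy d (X + Pi.single (Fin.last d) 1) = busy d X + d := by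
      rw [busy_add]; rfl
    rcases hC with hC | ⟨j, hj0, hjd, hXj, hother, hdvd⟩
    · left; intro i hi1 hi2; rw [hcoord i hi2]; exact hC i hi1 hi2
    · right
      refine ⟨j, hj0, hjd, ?_, ?_, ?_⟩
      · rw [hcoord j hjd]; exact hXj
      · intro i hi1 hi2 hij; rw [hcoord i hi2]; exact hother i hi1 hi2 hij
      · rw [hbY]
        have : n - (busy d X + d) = (n - busy d X) - d := by omega
        rw [this]
        exact Nat.dvd_sub hdvd dvd_rfl
  · -- add e_j with I(X) = j
    have hX1 : ∀ i : Fin (d + 1), 0 < i.1 → i.1 < d → X i = 0 := by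
      rcases hC with hC | ⟨j', hj'0, hj'd, hXj', hother, hdvd⟩
      · exact hC
      · exfalso
        have := Nat.le_of_dvd (by omega) (hI ▸ hdvd)
        omega
    right
    refine ⟨j, hj0, hjd, ?_, ?_, ?_⟩
    · simp [hX1 j hj0 hjd]
    · intro i hi1 hi2 hij
      have : (X + Pi.single j 1 : Fin (d + 1) → ℕ) i = X i := by
        simp [Pi.single_eq_of_ne hij]
      rw [this]
      exact hX1 i hi1 hi2
    · rw [busy_add]
      have : n - (busy d X + j.1) = 0 := by omega
      simp [this]
  · -- remove e_i
    have hle : ∀ m, (X - Pi.single i 1 : Fin (d + 1) → ℕ) m ≤ X m := by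
      intro m; simp [Nat.sub_le]
    have hbY := busy_sub d X i hXi
    rcases hC with hC | ⟨j, hj0, hjd, hXj, hother, hdvd⟩
    · left; intro m hm1 hm2
      have := hle m; have := hC m hm1 hm2; omega
    · by_cases hij : i = j
      · subst hij
        left; intro m hm1 hm2
        by_cases hmi : m = i
        · subst hmi; simp [hXj]
        · have := hle m
          have := hother m hm1 hm2 hmi
          omega
      · have hid : i.1 = d := by
          have hile : i.1 ≤ d := by omega
          rcases Nat.lt_or_ge i.1 d with h | h
          · exfalso
            have := hother i hi0 h hij
            omega
          · omega
      -- i = last d, j unchanged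
        have hine : ∀ m : Fin (d + 1), m.1 < d → m ≠ i := by
          intro m hm h; rw [h] at hm; omega
        right
        refine ⟨j, hj0, hjd, ?_, ?_, ?_⟩
        · have : (X - Pi.single i 1 : Fin (d + 1) → ℕ) j = X j := by
            simp [Pi.single_eq_of_ne (hine j hjd)]
          rw [this]; exact hXj
        · intro m hm1 hm2 hmj
          have : (X - Pi.single i 1 : Fin (d + 1) → ℕ) m = X m := by
            simp [Pi.single_eq_of_ne (hine m hm2)]
          rw [this]; exact hother m hm1 hm2 hmj
        · have heq : n - busy d (X - Pi.single i 1) = (n - busy d X) + d := by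
            omega
          rw [heq]
          exact Nat.dvd_add hdvd dvd_rfl

lemma jobsLow_eq_zero_iff (d : ℕ) (X : Fin (d + 1) → ℕ) :
    jobsLow d X = 0 ↔ ∀ i : Fin (d + 1), 0 < i.1 → i.1 < d → X i = 0 := by
  unfold jobsLow
  rw [Finset.sum_eq_zero_iff]
  constructor
  · intro h i hi1 hi2
    have := h i (Finset.mem_univ i)
    simpa [hi1, hi2] using this
  · intro h i _
    by_cases hi : 0 < i.1 ∧ i.1 < d
    · simp [hi, h i hi.1 hi.2]
    · rw [if_neg hi]

lemma cset_jobsLow (n d : ℕ) (X : Fin (d + 1) → ℕ) (hC : Cset n d X) :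
    jobsLow d X ≤ 1 := by
  rcases hC with hC | ⟨j, hj0, hjd, hXj, hother, -⟩
  · rw [(jobsLow_eq_zero_iff d X).2 hC]; omega
  · unfold jobsLow
    rw [Finset.sum_eq_single j]
    · simp [hj0, hjd, hXj]
    · intro i _ hij
      by_cases hi : 0 < i.1 ∧ i.1 < d
      · simp [hi, hother i hi.1 hi.2 hij]
      · rw [if_neg hi]
    · intro h; exact absurd (Finset.mem_univ j) h

/-- Lemma 2, first part: `C` is invariant under single transitions of the greedy
full-access chain; in particular, along any trajectory (a chain of positive-rate
transitions) started from a state with `∑_{i=1}^{d−1} X_i = 0`, one has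
`∑_{i=1}^{d−1} X_i ≤ 1` at all times. -/
theorem stmt2 (n d : ℕ) (hn : 1 ≤ n) (hd : 1 ≤ d) (hdn : d ≤ n) (lam : ℝ)
    (hlam0 : 0 < lam) (hlam1 : lam ≤ 1) :
    (∀ X ∈ stateSpace n d, Cset n d X → ∀ Y, step n d X Y → Cset n d Y) ∧
      ∀ X Y : Fin (d + 1) → ℕ, X ∈ stateSpace n d → jobsLow d X = 0 →
        Relation.ReflTransGen (step n d) X Y → jobsLow d Y ≤ 1 := by
  constructor
  · exact fun X hX hC Y hs => cset_step n d hd X hX hC Y hs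
  · intro X Y hX h0 hrel
    have key : Y ∈ stateSpace n d ∧ Cset n d Y := by
      induction hrel with
      | refl => exact ⟨hX, Or.inl ((jobsLow_eq_zero_iff d X).1 h0)⟩
      | tail hab hbc ih =>
        exact ⟨step_mem n d hd _ _ ih.1 hbc, cset_step n d hd _ ih.1 ih.2 _ hbc⟩
    exact cset_jobsLow n d Y key.2
end

section
/- Every stationary distribution π of the greedy full-access chain satisfies π(X) = 0 for every state X with Σ_{i=1}^{d−1} X_i ≥ 2; that is, any stationary distribution is concentrated on states in which at most one job occupies fewer than d servers. (Lemma 2, second part.) -/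
open Finset

namespace Stmt3Aux

/-- Low jobs at sizes other than `n % d`. -/
def lowOther (n d : ℕ) (X : Fin (d + 1) → ℕ) : ℕ :=
  ∑ i : Fin (d + 1), if 0 < i.1 ∧ i.1 < d ∧ i.1 ≠ n % d then X i else 0

/-- Low jobs at size `n % d`. -/
def lowS (n d : ℕ) (X : Fin (d + 1) → ℕ) : ℕ :=
  ∑ i : Fin (d + 1), if 0 < i.1 ∧ i.1 = n % d then X i else 0

def defect (n d : ℕ) (X : Fin (d + 1) → ℕ) : ℕ :=
  lowOther n d X + (lowS n d X - 1)

variable {n d : ℕ}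

lemma sum_ite_single (P : Fin (d + 1) → Prop) [DecidablePred P] (j : Fin (d + 1)) :
    ∑ i : Fin (d + 1), (if P i then (Pi.single j 1 : Fin (d + 1) → ℕ) i else 0) = if P j then 1 else 0 := by
  have h : ∀ i : Fin (d + 1), (if P i then (Pi.single j 1 : Fin (d + 1) → ℕ) i else 0)
      = if i = j then (if P j then 1 else 0) else 0 := by
    intro i
    by_cases hij : i = j
    · subst hij; simp
    · simp [Pi.single_apply, hij]
  simp only [h]
  simp

lemma sum_ite_add (P : Fin (d + 1) → Prop) [DecidablePred P] (X Y : Fin (d + 1) → ℕ) :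
    ∑ i : Fin (d + 1), (if P i then (X i + Y i) else 0)
      = (∑ i : Fin (d + 1), if P i then X i else 0)
        + ∑ i : Fin (d + 1), (if P i then Y i else 0) := by
  rw [← Finset.sum_add_distrib]
  exact Finset.sum_congr rfl fun i _ => by split_ifs <;> simp

lemma jobsLow_eq (hd : 1 ≤ d) (X : Fin (d + 1) → ℕ) :
    jobsLow d X = lowOther n d X + lowS n d X := by
  rw [jobsLow, lowOther, lowS, ← Finset.sum_add_distrib]
  refine Finset.sum_congr rfl fun i _ => ?_
  have hmod : n % d < d := Nat.mod_lt _ hd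
  split_ifs <;> omega

lemma lowOther_add (X : Fin (d + 1) → ℕ) (j : Fin (d + 1)) :
    lowOther n d (X + Pi.single j 1)
      = lowOther n d X + (if 0 < j.1 ∧ j.1 < d ∧ j.1 ≠ n % d then 1 else 0) := by
  unfold lowOther
  simp only [Pi.add_apply]
  rw [sum_ite_add, sum_ite_single]

lemma lowS_add (X : Fin (d + 1) → ℕ) (j : Fin (d + 1)) :
    lowS n d (X + Pi.single j 1)
      = lowS n d X + (if 0 < j.1 ∧ j.1 = n % d then 1 else 0) := by
  unfold lowS
  simp only [Pi.add_apply]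
  rw [sum_ite_add, sum_ite_single]

lemma busy_add (X : Fin (d + 1) → ℕ) (j : Fin (d + 1)) :
    busy d (X + Pi.single j 1) = busy d X + j.1 := by
  unfold busy
  simp only [Pi.add_apply, Nat.mul_add]
  rw [Finset.sum_add_distrib]
  congr 1
  have h : ∀ i : Fin (d + 1), i.1 * (Pi.single j 1 : Fin (d + 1) → ℕ) i = if i = j then j.1 else 0 := by
    intro i
    by_cases hij : i = j
    · subst hij; simp
    · simp [Pi.single_apply, hij]
  simp only [h]
  simp

lemma sub_add_cancel' (X : Fin (d + 1) → ℕ) (j : Fin (d + 1)) (h : 1 ≤ X j) :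
    (X - Pi.single j 1) + Pi.single j 1 = X := by
  funext i
  simp only [Pi.add_apply, Pi.sub_apply, Pi.single_apply]
  by_cases hij : i = j
  · subst hij; simp; omega
  · simp [hij]

end Stmt3Aux
namespace Stmt3Aux
variable {n d : ℕ}

lemma defect_add_last (hd : 1 ≤ d) (X : Fin (d + 1) → ℕ) :
    defect n d (X + Pi.single (Fin.last d) 1) = defect n d X := by
  have hmod : n % d < d := Nat.mod_lt _ hd
  unfold defect
  rw [lowOther_add, lowS_add]
  simp only [Fin.val_last]
  rw [if_neg (by omega), if_neg (by omega)]
  omega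

lemma defect_sub_le (X : Fin (d + 1) → ℕ) (j : Fin (d + 1)) (h : 1 ≤ X j) :
    defect n d (X - Pi.single j 1) ≤ defect n d X := by
  have h1 := lowOther_add (n := n) (X - Pi.single j 1) j
  have h2 := lowS_add (n := n) (X - Pi.single j 1) j
  rw [sub_add_cancel' X j h] at h1 h2
  unfold defect
  split_ifs at h1 h2 <;> omega

lemma exists_escape (hd : 1 ≤ d) (X : Fin (d + 1) → ℕ) (h : 1 ≤ defect n d X) :
    ∃ j : Fin (d + 1), 0 < j.1 ∧ j.1 < d ∧ 1 ≤ X j ∧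
      defect n d (X - Pi.single j 1) + 1 = defect n d X := by
  have hmod : n % d < d := Nat.mod_lt _ hd
  unfold defect at h
  by_cases hlo : lowOther n d X = 0
  · -- then lowS ≥ 2
    have hS : 2 ≤ lowS n d X := by omega
    have hne : lowS n d X ≠ 0 := by omega
    obtain ⟨j, -, hj⟩ := Finset.exists_ne_zero_of_sum_ne_zero (by rw [← lowS]; exact hne)
    have hj' : (0 < j.1 ∧ j.1 = n % d) ∧ 1 ≤ X j := by
      by_cases hc : 0 < j.1 ∧ j.1 = n % d
      · refine ⟨hc, ?_⟩; rw [if_pos hc] at hj; omega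
      · rw [if_neg hc] at hj; omega
    refine ⟨j, hj'.1.1, by omega, hj'.2, ?_⟩
    have h1 := lowOther_add (n := n) (X - Pi.single j 1) j
    have h2 := lowS_add (n := n) (X - Pi.single j 1) j
    rw [sub_add_cancel' X j hj'.2] at h1 h2
    rw [if_pos hj'.1] at h2
    unfold defect
    split_ifs at h1 <;> omega
  · have hne : lowOther n d X ≠ 0 := hlo
    obtain ⟨j, -, hj⟩ := Finset.exists_ne_zero_of_sum_ne_zero (by rw [← lowOther]; exact hne)
    have hj' : (0 < j.1 ∧ j.1 < d ∧ j.1 ≠ n % d) ∧ 1 ≤ X j := by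
      by_cases hc : 0 < j.1 ∧ j.1 < d ∧ j.1 ≠ n % d
      · refine ⟨hc, ?_⟩; rw [if_pos hc] at hj; omega
      · rw [if_neg hc] at hj; omega
    refine ⟨j, hj'.1.1, hj'.1.2.1, hj'.2, ?_⟩
    have h1 := lowOther_add (n := n) (X - Pi.single j 1) j
    have h2 := lowS_add (n := n) (X - Pi.single j 1) j
    rw [sub_add_cancel' X j hj'.2] at h1 h2
    rw [if_pos hj'.1] at h1
    rw [if_neg (by push_neg; intro _ he; exact absurd he hj'.1.2.2)] at h2
    unfold defect
    omega

lemma busy_eq_of_lowOther (hd : 1 ≤ d) (X : Fin (d + 1) → ℕ) (h0 : X 0 = 0)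
    (hlo : lowOther n d X = 0) :
    busy d X = n % d * lowS n d X + d * X (Fin.last d) := by
  have hz : ∀ i : Fin (d + 1), (if 0 < i.1 ∧ i.1 < d ∧ i.1 ≠ n % d then X i else 0) = 0 := by
    intro i
    exact (Finset.sum_eq_zero_iff.mp hlo) i (Finset.mem_univ i)
  have hmod : n % d < d := Nat.mod_lt _ hd
  unfold busy lowS
  have key : ∀ i : Fin (d + 1), i.1 * X i
      = n % d * (if 0 < i.1 ∧ i.1 = n % d then X i else 0)
        + (if i = Fin.last d then d * X i else 0) := by
    intro i
    by_cases hlast : i = Fin.last d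
    · subst hlast
      have c1 : ¬(0 < (Fin.last d).1 ∧ (Fin.last d).1 = n % d) := by
        rw [Fin.val_last]; omega
      rw [if_neg c1, if_pos rfl, Fin.val_last, Nat.mul_zero, Nat.zero_add]
    · have hid : i.1 < d := by
        have := i.2
        rcases Nat.lt_or_ge i.1 d with h | h
        · exact h
        · exact absurd (Fin.ext (by rw [Fin.val_last]; omega : i.1 = (Fin.last d).1)) hlast
      by_cases h0i : i.1 = 0
      · have : i = 0 := Fin.ext h0i
        subst this
        simp [h0, hmod]
      · by_cases hs : i.1 = n % d
        · rw [if_pos ⟨by omega, hs⟩, if_neg hlast, hs]; omega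
        · have := hz i
          rw [if_pos ⟨by omega, hid, hs⟩] at this
          rw [if_neg (by tauto), if_neg hlast, this]
          simp
  rw [Finset.sum_congr rfl fun i _ => key i, Finset.sum_add_distrib, ← Finset.mul_sum]
  congr 1
  simp

lemma good_arrival (hd : 1 ≤ d) (X : Fin (d + 1) → ℕ) (hbn : busy d X ≤ n) (h0 : X 0 = 0)
    (hdef : defect n d X = 0) (j : Fin (d + 1))
    (hj : 0 < j.1 ∧ j.1 < d ∧ n - busy d X = j.1) :
    defect n d (X + Pi.single j 1) = 0 := by
  have hmod : n % d < d := Nat.mod_lt _ hd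
  have hlo : lowOther n d X = 0 := by unfold defect at hdef; omega
  have hS : lowS n d X = 0 ∨ lowS n d X = 1 := by unfold defect at hdef; omega
  have hb := busy_eq_of_lowOther hd X h0 hlo
  have hn' : n = busy d X + j.1 := by omega
  have hjs : j.1 = n % d ∧ lowS n d X = 0 := by
    rcases hS with hS | hS
    · rw [hS] at hb
      have hrepr : d * X (Fin.last d) + j.1 = n := by omega
      have hm : n % d = (d * X (Fin.last d) + j.1) % d := by rw [hrepr]
      rw [Nat.mul_add_mod, Nat.mod_eq_of_lt hj.2.1] at hm
      exact ⟨hm.symm, hS⟩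
    · exfalso
      rw [hS, Nat.mul_one] at hb
      have hrepr : d * X (Fin.last d) + (n % d + j.1) = n := by omega
      have hm : n % d = (d * X (Fin.last d) + (n % d + j.1)) % d := by rw [hrepr]
      rw [Nat.mul_add_mod] at hm
      rcases Nat.lt_or_ge (n % d + j.1) d with h | h
      · rw [Nat.mod_eq_of_lt h] at hm; omega
      · have h2d : n % d + j.1 - d < d := by omega
        rw [Nat.mod_eq_sub_mod h, Nat.mod_eq_of_lt h2d] at hm
        omega
  have h1 := lowOther_add (n := n) X j
  have h2 := lowS_add (n := n) X j
  rw [if_neg (by push_neg; intro _ _; omega)] at h1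
  rw [if_pos ⟨hj.1, hjs.1⟩] at h2
  unfold defect
  omega

end Stmt3Aux
namespace Stmt3Aux
variable {n d : ℕ}

lemma Gfull_eq_zero (lam : ℝ) (f : (Fin (d + 1) → ℕ) → ℝ) (X : Fin (d + 1) → ℕ)
    (h1 : f (X + Pi.single (Fin.last d) 1) = f X)
    (h2 : ∀ j : Fin (d + 1), 0 < j.1 → j.1 < d → n - busy d X = j.1 →
      f (X + Pi.single j 1) = f X)
    (h3 : ∀ i : Fin (d + 1), 1 ≤ X i → f (X - Pi.single i 1) = f X) :
    Gfull n d lam f X = 0 := by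
  have e2 : ∑ j : Fin (d + 1),
      (if 0 < j.1 ∧ j.1 < d ∧ n - busy d X = j.1 then (1 : ℝ) else 0) *
        (f (X + Pi.single j 1) - f X) = 0 := by
    refine Finset.sum_eq_zero fun j _ => ?_
    by_cases hc : 0 < j.1 ∧ j.1 < d ∧ n - busy d X = j.1
    · rw [h2 j hc.1 hc.2.1 hc.2.2, sub_self, mul_zero]
    · rw [if_neg hc, zero_mul]
  have e3 : ∑ i : Fin (d + 1), (i.1 * X i : ℝ) * (f (X - Pi.single i 1) - f X) = 0 := by
    refine Finset.sum_eq_zero fun i _ => ?_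
    by_cases hXi : 1 ≤ X i
    · rw [h3 i hXi, sub_self, mul_zero]
    · have hz : X i = 0 := by omega
      simp [hz]
  unfold Gfull
  rw [h1, e2, e3]
  ring

lemma Gfull_nonpos (lam : ℝ) (hnl : 0 ≤ (n : ℝ) * lam) (f : (Fin (d + 1) → ℕ) → ℝ)
    (X : Fin (d + 1) → ℕ) (hfX : f X = 1) (hub : ∀ Y, f Y ≤ 1) :
    Gfull n d lam f X ≤ 0 := by
  unfold Gfull
  have hA : (if d ≤ n - busy d X then (1 : ℝ) else 0) *
      (f (X + Pi.single (Fin.last d) 1) - f X) ≤ 0 := by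
    apply mul_nonpos_of_nonneg_of_nonpos
    · split_ifs <;> norm_num
    · rw [hfX]; linarith [hub (X + Pi.single (Fin.last d) 1)]
  have hT2 : ∑ j : Fin (d + 1),
      (if 0 < j.1 ∧ j.1 < d ∧ n - busy d X = j.1 then (1 : ℝ) else 0) *
        (f (X + Pi.single j 1) - f X) ≤ 0 := by
    refine Finset.sum_nonpos fun j _ => ?_
    apply mul_nonpos_of_nonneg_of_nonpos
    · split_ifs <;> norm_num
    · rw [hfX]; linarith [hub (X + Pi.single j 1)]
  have hT3 : ∑ i : Fin (d + 1), (i.1 * X i : ℝ) * (f (X - Pi.single i 1) - f X) ≤ 0 := by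
    refine Finset.sum_nonpos fun i _ => ?_
    apply mul_nonpos_of_nonneg_of_nonpos
    · positivity
    · rw [hfX]; linarith [hub (X - Pi.single i 1)]
  have := mul_nonpos_of_nonneg_of_nonpos hnl (by linarith : (if d ≤ n - busy d X then (1 : ℝ) else 0) *
      (f (X + Pi.single (Fin.last d) 1) - f X) + ∑ j : Fin (d + 1),
      (if 0 < j.1 ∧ j.1 < d ∧ n - busy d X = j.1 then (1 : ℝ) else 0) *
        (f (X + Pi.single j 1) - f X) ≤ 0)
  linarith

lemma Gfull_le_neg_one (hd : 1 ≤ d) (lam : ℝ) (hnl : 0 ≤ (n : ℝ) * lam) (t : ℕ)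
    (f : (Fin (d + 1) → ℕ) → ℝ) (X : Fin (d + 1) → ℕ)
    (hf : f = fun Y => if t + 1 ≤ defect n d Y then (1 : ℝ) else 0)
    (hdef : defect n d X = t + 1) :
    Gfull n d lam f X ≤ -1 := by
  have hub : ∀ Y, f Y ≤ 1 := by intro Y; rw [hf]; dsimp only; split_ifs <;> norm_num
  have hfX : f X = 1 := by rw [hf]; dsimp only; rw [if_pos (by omega)]
  obtain ⟨j₀, hj1, hj2, hj3, hj4⟩ := exists_escape (n := n) hd X (by omega)
  have hfj : f (X - Pi.single j₀ 1) = 0 := by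
    rw [hf]; dsimp only; rw [if_neg (by omega)]
  have hA : (if d ≤ n - busy d X then (1 : ℝ) else 0) *
      (f (X + Pi.single (Fin.last d) 1) - f X) ≤ 0 := by
    apply mul_nonpos_of_nonneg_of_nonpos
    · split_ifs <;> norm_num
    · rw [hfX]; linarith [hub (X + Pi.single (Fin.last d) 1)]
  have hT2 : ∑ j : Fin (d + 1),
      (if 0 < j.1 ∧ j.1 < d ∧ n - busy d X = j.1 then (1 : ℝ) else 0) *
        (f (X + Pi.single j 1) - f X) ≤ 0 := by
    refine Finset.sum_nonpos fun j _ => ?_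
    apply mul_nonpos_of_nonneg_of_nonpos
    · split_ifs <;> norm_num
    · rw [hfX]; linarith [hub (X + Pi.single j 1)]
  have hc1 : (1 : ℝ) ≤ (j₀.1 * X j₀ : ℕ) := by
    have : 1 ≤ j₀.1 * X j₀ := Nat.one_le_iff_ne_zero.mpr (by positivity)
    exact_mod_cast this
  have hT3 : ∑ i : Fin (d + 1), (i.1 * X i : ℝ) * (f (X - Pi.single i 1) - f X) ≤ -1 := by
    have hle : ∀ i ∈ Finset.univ, (i.1 * X i : ℝ) * (f (X - Pi.single i 1) - f X)
        ≤ if i = j₀ then (-1 : ℝ) else 0 := by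
      intro i _
      by_cases hij : i = j₀
      · subst hij
        rw [if_pos rfl, hfj, hfX]
        have : (i.1 * X i : ℝ) * (0 - 1) = -((i.1 : ℝ) * (X i : ℝ)) := by ring
        rw [this]
        have : (1 : ℝ) ≤ (i.1 : ℝ) * (X i : ℝ) := by push_cast at hc1 ⊢; linarith
        linarith
      · rw [if_neg hij]
        apply mul_nonpos_of_nonneg_of_nonpos
        · positivity
        · rw [hfX]; linarith [hub (X - Pi.single i 1)]
    calc ∑ i : Fin (d + 1), (i.1 * X i : ℝ) * (f (X - Pi.single i 1) - f X)
        ≤ ∑ i : Fin (d + 1), (if i = j₀ then (-1 : ℝ) else 0) := Finset.sum_le_sum hle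
      _ = -1 := by simp
  have hAT2 := mul_nonpos_of_nonneg_of_nonpos hnl (by linarith :
      (if d ≤ n - busy d X then (1 : ℝ) else 0) *
      (f (X + Pi.single (Fin.last d) 1) - f X) + ∑ j : Fin (d + 1),
      (if 0 < j.1 ∧ j.1 < d ∧ n - busy d X = j.1 then (1 : ℝ) else 0) *
        (f (X + Pi.single j 1) - f X) ≤ 0)
  unfold Gfull
  linarith

end Stmt3Aux
/-- Lemma 2, second part: every stationary distribution of the greedy full-access chain
vanishes on states with `∑_{i=1}^{d−1} X_i ≥ 2`. -/
theorem stmt3 (n d : ℕ) (hn : 1 ≤ n) (hd : 1 ≤ d) (hdn : d ≤ n) (lam : ℝ)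
    (hlam0 : 0 < lam) (hlam1 : lam ≤ 1) (π : (Fin (d + 1) → ℕ) → ℝ)
    (hprob : IsProbOn n d π) (hstat : IsStationaryFull n d lam π) :
    ∀ X : Fin (d + 1) → ℕ, 2 ≤ jobsLow d X → π X = 0 := by
  classical
  open Stmt3Aux in
  have hnl : 0 ≤ (n : ℝ) * lam := by positivity
  have main : ∀ t : ℕ, ∀ X ∈ stateSpace n d,
      1 ≤ defect n d X → defect n d X ≤ t → π X = 0 := by
    intro t
    induction t with
    | zero => intro X _ h1 h2; omega
    | succ t IH =>
      intro X hXS h1 h2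
      by_cases hle : defect n d X ≤ t
      · exact IH X hXS h1 hle
      · have hdef : defect n d X = t + 1 := by omega
        set f : (Fin (d + 1) → ℕ) → ℝ :=
          (fun Y => if t + 1 ≤ defect n d Y then (1 : ℝ) else 0) with hf
        have hub : ∀ Y, f Y ≤ 1 := by
          intro Y; rw [hf]; dsimp only; split_ifs <;> norm_num
        have hterm : ∀ Y ∈ stateSpace n d, π Y * Gfull n d lam f Y ≤ 0 := by
          intro Y hYS
          have hYmem := Finset.mem_filter.mp hYS
          have hbn : busy d Y ≤ n := hYmem.2.1
          have h0 : Y 0 = 0 := hYmem.2.2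
          rcases Nat.eq_zero_or_pos (defect n d Y) with h | h
          · have hg : Gfull n d lam f Y = 0 := by
              apply Gfull_eq_zero lam f Y
              · rw [hf]; dsimp only
                rw [defect_add_last (n := n) hd Y]
              · intro j hj1 hj2 hj3
                rw [hf]; dsimp only
                rw [good_arrival hd Y hbn h0 h j ⟨hj1, hj2, hj3⟩, h]
              · intro i hXi
                have hsub := defect_sub_le (n := n) Y i hXi
                rw [h] at hsub
                rw [hf]; dsimp only
                rw [Nat.le_zero.mp hsub, h]
            rw [hg, mul_zero]
          · by_cases hht : defect n d Y ≤ t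
            · rw [IH Y hYS h hht, zero_mul]
            · have hfY : f Y = 1 := by
                rw [hf]; dsimp only; rw [if_pos (by omega)]
              exact mul_nonpos_of_nonneg_of_nonpos (hprob.1 Y)
                (Gfull_nonpos lam hnl f Y hfY hub)
        have hzero : π X * Gfull n d lam f X = 0 :=
          (Finset.sum_eq_zero_iff_of_nonpos hterm).mp (hstat f) X hXS
        have hneg : Gfull n d lam f X ≤ -1 :=
          Gfull_le_neg_one hd lam hnl t f X hf hdef
        rcases mul_eq_zero.mp hzero with h | h
        · exact h
        · linarith
  intro X hX2
  by_cases hXS : X ∈ stateSpace n d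
  · have hjl := jobsLow_eq (n := n) hd X
    have h1 : 1 ≤ defect n d X := by unfold Stmt3Aux.defect; omega
    exact main (defect n d X) X hXS h1 le_rfl
  · exact hprob.2.2 X hXS
end

section
/- Suppose λ = 1 − β·n^{−α} with α ∈ [0,1) and β > 0, and suppose β·n^{1−α} ≥ 2d (so that λ ≤ 1 − 2d/n). Then for every stationary distribution π of the greedy full-access chain, E_π[1(q_1 > 1 − d/n)·(λ − d·x_d)] ≤ 0, where x_d = X_d/n and q_1 = B(X)/n. (Lemma 2, concluding inequality.) -/
open Finset

/-! ### Auxiliary machinery -/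

/-- Number of servers occupied by jobs using fewer than `d` servers. -/
def lowW (d : ℕ) (X : Fin (d + 1) → ℕ) : ℕ :=
  ∑ i : Fin (d + 1), if i.1 < d then i.1 * X i else 0

/-- The conserved potential `μ(X) = L + (n − L) % d`. -/
def muF (n d : ℕ) (X : Fin (d + 1) → ℕ) : ℕ :=
  lowW d X + (n - lowW d X) % d

lemma lowW_add (d : ℕ) (X Y : Fin (d + 1) → ℕ) :
    lowW d (X + Y) = lowW d X + lowW d Y := by
  unfold lowW
  rw [← Finset.sum_add_distrib]
  refine Finset.sum_congr rfl fun i _ => ?_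
  by_cases h : i.1 < d <;> simp [h, mul_add]

lemma lowW_single (d : ℕ) (j : Fin (d + 1)) :
    lowW d (Pi.single j (1 : ℕ)) = if j.1 < d then j.1 else 0 := by
  unfold lowW
  rw [Finset.sum_eq_single j]
  · by_cases h : j.1 < d <;> simp [h]
  · intro i _ hij
    simp [Pi.single_eq_of_ne hij]
  · intro h; exact absurd (Finset.mem_univ j) h

lemma busy_eq_lowW (d : ℕ) (X : Fin (d + 1) → ℕ) :
    busy d X = lowW d X + d * X (Fin.last d) := by
  unfold busy lowW
  rw [Fin.sum_univ_castSucc, Fin.sum_univ_castSucc]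
  simp [Fin.is_lt]

lemma sub_single_of_zero {d : ℕ} (X : Fin (d + 1) → ℕ) (i : Fin (d + 1)) (h : X i = 0) :
    X - Pi.single i 1 = X := by
  funext j
  by_cases hj : j = i
  · subst hj; simp [h]
  · simp [Pi.single_eq_of_ne hj]

lemma sub_add_single {d : ℕ} (X : Fin (d + 1) → ℕ) (i : Fin (d + 1)) (h : 1 ≤ X i) :
    (X - Pi.single i 1) + Pi.single i 1 = X := by
  funext j
  by_cases hj : j = i
  · subst hj; simp; omega
  · simp [Pi.single_eq_of_ne hj]

lemma lowW_sub (d : ℕ) (X : Fin (d + 1) → ℕ) (i : Fin (d + 1)) (h : 1 ≤ X i) :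
    lowW d X = lowW d (X - Pi.single i 1) + (if i.1 < d then i.1 else 0) := by
  conv_lhs => rw [← sub_add_single X i h]
  rw [lowW_add, lowW_single]

lemma muF_add_last (n d : ℕ) (X : Fin (d + 1) → ℕ) :
    muF n d (X + Pi.single (Fin.last d) 1) = muF n d X := by
  unfold muF
  rw [lowW_add, lowW_single]
  simp

lemma muF_arrival (n d : ℕ) (X : Fin (d + 1) → ℕ) (j : Fin (d + 1))
    (hj0 : 0 < j.1) (hjd : j.1 < d) (hI : n - busy d X = j.1) :
    muF n d (X + Pi.single j 1) = muF n d X := by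
  have hb := busy_eq_lowW d X
  have hn : n = lowW d X + d * X (Fin.last d) + j.1 := by omega
  unfold muF
  rw [lowW_add, lowW_single, if_pos hjd]
  have h1 : n - (lowW d X + j.1) = d * X (Fin.last d) := by omega
  have h2 : n - lowW d X = d * X (Fin.last d) + j.1 := by omega
  rw [h1, h2, Nat.mul_mod_right, Nat.mul_add_mod, Nat.mod_eq_of_lt hjd]
  omega

lemma muF_death_le (n d : ℕ) (X : Fin (d + 1) → ℕ) (i : Fin (d + 1))
    (hbn : busy d X ≤ n) :
    muF n d (X - Pi.single i 1) ≤ muF n d X := by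
  by_cases hXi : X i = 0
  · rw [sub_single_of_zero X i hXi]
  by_cases hid : i.1 < d
  · have h := lowW_sub d X i (by omega)
    rw [if_pos hid] at h
    have hlb : lowW d X ≤ n := by
      have := busy_eq_lowW d X; omega
    unfold muF
    rw [h]
    set a := lowW d (X - Pi.single i 1) with ha
    have hain : a + i.1 ≤ n := by omega
    set t := n - a - i.1 with ht
    have e4 : n - (a + i.1) = t := by omega
    have e0 : n - a = t + i.1 := by omega
    have e5 : (n - a) % d = (t + i.1) % d := by rw [e0]
    have e1 : (t + i.1) % d = (t % d + i.1 % d) % d := Nat.add_mod _ _ _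
    have e2 : (t % d + i.1 % d) % d ≤ t % d + i.1 % d := Nat.mod_le _ _
    have e3 : i.1 % d ≤ i.1 := Nat.mod_le _ _
    rw [e5, e4]
    omega
  · have h := lowW_sub d X i (by omega)
    rw [if_neg hid, Nat.add_zero] at h
    unfold muF
    rw [h]

lemma Gfull_muF (n d : ℕ) (lam : ℝ) (X : Fin (d + 1) → ℕ) :
    Gfull n d lam (fun Z => (muF n d Z : ℝ)) X =
      ∑ i : Fin (d + 1), (i.1 * X i : ℝ) *
        ((muF n d (X - Pi.single i 1) : ℝ) - (muF n d X : ℝ)) := by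
  have h1 : ((muF n d (X + Pi.single (Fin.last d) 1) : ℕ) : ℝ)
      - ((muF n d X : ℕ) : ℝ) = 0 := by
    rw [muF_add_last]; ring
  have h2 : ∀ j : Fin (d + 1),
      (if 0 < j.1 ∧ j.1 < d ∧ n - busy d X = j.1 then (1 : ℝ) else 0) *
        (((muF n d (X + Pi.single j 1) : ℕ) : ℝ) - ((muF n d X : ℕ) : ℝ)) = 0 := by
    intro j
    split_ifs with h
    · rw [muF_arrival n d X j h.1 h.2.1 h.2.2, sub_self, mul_zero]
    · rw [zero_mul]
  simp only [Gfull]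
  rw [h1, Finset.sum_eq_zero fun j _ => h2 j]
  ring

lemma exists_low (d : ℕ) (X : Fin (d + 1) → ℕ) (h : lowW d X ≠ 0) :
    ∃ i : Fin (d + 1), 0 < i.1 ∧ i.1 < d ∧ 0 < X i := by
  by_contra hc
  push_neg at hc
  apply h
  unfold lowW
  apply Finset.sum_eq_zero
  intro i _
  by_cases hid : i.1 < d
  · rw [if_pos hid]
    by_cases hi0 : i.1 = 0
    · simp [hi0]
    · have hx := hc i (by omega) hid
      simp [Nat.le_zero.mp hx]
  · rw [if_neg hid]

lemma supp_closed (n d : ℕ) (lam : ℝ) (hlam0 : 0 ≤ lam) (π : (Fin (d + 1) → ℕ) → ℝ)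
    (hprob : IsProbOn n d π) (hstat : IsStationaryFull n d lam π)
    (X : Fin (d + 1) → ℕ) (hX : X ∈ stateSpace n d) (hπX : 0 < π X)
    (i : Fin (d + 1)) (hi0 : 0 < i.1) (hXi : 0 < X i) :
    (X - Pi.single i 1) ∈ stateSpace n d ∧ 0 < π (X - Pi.single i 1) := by
  classical
  have hne : X ≠ X - Pi.single i 1 := by
    intro h
    have h' := congrFun h i
    simp only [Pi.sub_apply, Pi.single_eq_same] at h'
    omega
  set g : (Fin (d + 1) → ℕ) → ℝ := fun Z => if Z = X - Pi.single i 1 then 1 else 0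
    with hg
  have hg_nonneg : ∀ Z, 0 ≤ g Z := by
    intro Z
    by_cases h : Z = X - Pi.single i 1 <;> simp [hg, h]
  have hgX : g X = 0 := if_neg hne
  have hGnn : ∀ Z, Z ≠ X - Pi.single i 1 → 0 ≤ Gfull n d lam g Z := by
    intro Z hZ
    have hgZ : g Z = 0 := if_neg hZ
    unfold Gfull
    apply add_nonneg
    · apply mul_nonneg (mul_nonneg (Nat.cast_nonneg n) hlam0)
      apply add_nonneg
      · apply mul_nonneg
        · split <;> norm_num
        · rw [hgZ, sub_zero]; exact hg_nonneg _
      · apply Finset.sum_nonneg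
        intro j _
        apply mul_nonneg
        · split <;> norm_num
        · rw [hgZ, sub_zero]; exact hg_nonneg _
    · apply Finset.sum_nonneg
      intro k _
      apply mul_nonneg
      · positivity
      · rw [hgZ, sub_zero]; exact hg_nonneg _
  have hGX : ((i.1 : ℝ) * (X i : ℝ)) ≤ Gfull n d lam g X := by
    unfold Gfull
    have harr : 0 ≤ (n : ℝ) * lam *
        ((if d ≤ n - busy d X then (1 : ℝ) else 0) *
            (g (X + Pi.single (Fin.last d) 1) - g X) +
          ∑ j : Fin (d + 1),
            (if 0 < j.1 ∧ j.1 < d ∧ n - busy d X = j.1 then (1 : ℝ) else 0) *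
              (g (X + Pi.single j 1) - g X)) := by
      apply mul_nonneg (mul_nonneg (Nat.cast_nonneg n) hlam0)
      apply add_nonneg
      · apply mul_nonneg
        · split <;> norm_num
        · rw [hgX, sub_zero]; exact hg_nonneg _
      · apply Finset.sum_nonneg
        intro j _
        apply mul_nonneg
        · split <;> norm_num
        · rw [hgX, sub_zero]; exact hg_nonneg _
    have hdeath : ((i.1 : ℝ) * (X i : ℝ)) ≤
        ∑ k : Fin (d + 1), (k.1 * X k : ℝ) * (g (X - Pi.single k 1) - g X) := by
      have hterm : ∀ k ∈ (Finset.univ : Finset (Fin (d + 1))),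
          0 ≤ (k.1 * X k : ℝ) * (g (X - Pi.single k 1) - g X) := by
        intro k _
        apply mul_nonneg
        · positivity
        · rw [hgX, sub_zero]; exact hg_nonneg _
      have hle := Finset.single_le_sum hterm (Finset.mem_univ i)
      have hgY : g (X - Pi.single i 1) = 1 := if_pos rfl
      calc ((i.1 : ℝ) * (X i : ℝ))
          = (i.1 * X i : ℝ) * (g (X - Pi.single i 1) - g X) := by
            rw [hgY, hgX]; ring
        _ ≤ _ := hle
    linarith
  have hπY : π (X - Pi.single i 1) ≠ 0 := by
    intro h0
    have hsum := hstat g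
    have hnn : ∀ Z ∈ stateSpace n d, 0 ≤ π Z * Gfull n d lam g Z := by
      intro Z _
      rcases eq_or_ne Z (X - Pi.single i 1) with rfl | hne'
      · rw [h0, zero_mul]
      · exact mul_nonneg (hprob.1 Z) (hGnn Z hne')
    have hzX := (Finset.sum_eq_zero_iff_of_nonneg hnn).mp hsum X hX
    have hpos : (0 : ℝ) < (i.1 : ℝ) * (X i : ℝ) := by
      apply mul_pos <;> exact_mod_cast (by omega : (0:ℕ) < _)
    nlinarith
  have hπYpos : 0 < π (X - Pi.single i 1) :=
    lt_of_le_of_ne (hprob.1 _) (Ne.symm hπY)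
  have hYS : (X - Pi.single i 1) ∈ stateSpace n d := by
    by_contra h
    exact hπY (hprob.2.2 _ h)
  exact ⟨hYS, hπYpos⟩

/-- Lemma 2, concluding inequality: if `λ = 1 − β·n^{−α}` with `α ∈ [0,1)`, `β > 0` and
`β·n^{1−α} ≥ 2d`, then for every stationary distribution `π` of the greedy full-access
chain, `E[1(q₁ > 1 − d/n)·(λ − d·x_d)] ≤ 0`. -/
theorem stmt4 (n d : ℕ) (hn : 1 ≤ n) (hd : 1 ≤ d) (hdn : d ≤ n) (α β lam : ℝ)
    (hα0 : 0 ≤ α) (hα1 : α < 1) (hβ : 0 < β)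
    (hlam : lam = 1 - β * (n : ℝ) ^ (-α)) (hlarge : 2 * d ≤ β * (n : ℝ) ^ (1 - α))
    (hlam0 : 0 ≤ lam) (hlam1 : lam ≤ 1) (π : (Fin (d + 1) → ℕ) → ℝ)
    (hprob : IsProbOn n d π) (hstat : IsStationaryFull n d lam π) :
    expec n d π
      (fun X => (if (1 : ℝ) - d / n < (busy d X : ℝ) / n then (1 : ℝ) else 0) *
        (lam - d * (X (Fin.last d) : ℝ) / n)) ≤ 0 := by
  classical
  have hS : ∀ {X : Fin (d + 1) → ℕ}, X ∈ stateSpace n d → busy d X ≤ n := by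
    intro X hX
    exact ((Finset.mem_filter.mp hX).2).1
  set f : (Fin (d + 1) → ℕ) → ℝ := fun Z => (muF n d Z : ℝ) with hf
  -- each stationary term for `f` is nonpositive, hence zero
  have hGle : ∀ X ∈ stateSpace n d, π X * Gfull n d lam f X ≤ 0 := by
    intro X hX
    have hGf := Gfull_muF n d lam X
    have hG0 : Gfull n d lam f X ≤ 0 := by
      rw [hf, hGf]
      apply Finset.sum_nonpos
      intro i _
      have h1 : ((muF n d (X - Pi.single i 1) : ℕ) : ℝ) - ((muF n d X : ℕ) : ℝ) ≤ 0 := by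
        have := muF_death_le n d X i (hS hX)
        have h' : ((muF n d (X - Pi.single i 1) : ℕ) : ℝ) ≤ ((muF n d X : ℕ) : ℝ) :=
          Nat.cast_le.mpr this
        linarith
      have h2 : (0 : ℝ) ≤ (i.1 * X i : ℝ) := by positivity
      exact mul_nonpos_iff.mpr (Or.inl ⟨h2, h1⟩)
    exact mul_nonpos_iff.mpr (Or.inl ⟨hprob.1 X, hG0⟩)
  have hzero : ∀ X ∈ stateSpace n d, π X * Gfull n d lam f X = 0 := by
    have hsum := hstat f
    have hneg : ∀ X ∈ stateSpace n d, 0 ≤ -(π X * Gfull n d lam f X) :=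
      fun X hX => neg_nonneg.mpr (hGle X hX)
    have hsum' : ∑ X ∈ stateSpace n d, -(π X * Gfull n d lam f X) = 0 := by
      rw [Finset.sum_neg_distrib, hsum, neg_zero]
    intro X hX
    have := (Finset.sum_eq_zero_iff_of_nonneg hneg).mp hsum' X hX
    linarith
  -- equality of μ along supported low-job deaths
  have hmueq : ∀ X ∈ stateSpace n d, 0 < π X → ∀ i : Fin (d + 1),
      0 < i.1 → i.1 < d → 0 < X i →
      muF n d (X - Pi.single i 1) = muF n d X := by
    intro X hX hπX i hi0 hid hXi
    have hG0 : Gfull n d lam f X = 0 := by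
      rcases mul_eq_zero.mp (hzero X hX) with h | h
      · exact absurd h (ne_of_gt hπX)
      · exact h
    rw [hf, Gfull_muF n d lam X] at hG0
    have hterm : ∀ k ∈ (Finset.univ : Finset (Fin (d + 1))),
        0 ≤ -((k.1 * X k : ℝ) *
          (((muF n d (X - Pi.single k 1) : ℕ) : ℝ) - ((muF n d X : ℕ) : ℝ))) := by
      intro k _
      rw [neg_nonneg]
      have h1 : ((muF n d (X - Pi.single k 1) : ℕ) : ℝ) - ((muF n d X : ℕ) : ℝ) ≤ 0 := by
        have h' : ((muF n d (X - Pi.single k 1) : ℕ) : ℝ) ≤ ((muF n d X : ℕ) : ℝ) :=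
          Nat.cast_le.mpr (muF_death_le n d X k (hS hX))
        linarith
      have h2 : (0 : ℝ) ≤ (k.1 * X k : ℝ) := by positivity
      exact mul_nonpos_iff.mpr (Or.inl ⟨h2, h1⟩)
    have hsum0 : ∑ k : Fin (d + 1), -((k.1 * X k : ℝ) *
        (((muF n d (X - Pi.single k 1) : ℕ) : ℝ) - ((muF n d X : ℕ) : ℝ))) = 0 := by
      rw [Finset.sum_neg_distrib, hG0, neg_zero]
    have hi := (Finset.sum_eq_zero_iff_of_nonneg hterm).mp hsum0 i (Finset.mem_univ i)
    have hpos : (0 : ℝ) < (i.1 : ℝ) * (X i : ℝ) := by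
      apply mul_pos <;> exact_mod_cast (by omega : (0 : ℕ) < _)
    have hdiff : ((muF n d (X - Pi.single i 1) : ℕ) : ℝ) = ((muF n d X : ℕ) : ℝ) := by
      nlinarith [hi, hpos, sq_nonneg (((muF n d (X - Pi.single i 1) : ℕ) : ℝ) - ((muF n d X : ℕ) : ℝ))]
    exact_mod_cast hdiff
  -- on the support, μ equals n % d
  have hmu : ∀ m : ℕ, ∀ X : Fin (d + 1) → ℕ, lowW d X ≤ m → X ∈ stateSpace n d →
      0 < π X → muF n d X = n % d := by
    intro m
    induction m with
    | zero =>
      intro X h0 hX hπX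
      have h0' : lowW d X = 0 := by omega
      unfold muF
      rw [h0']
      simp
    | succ m ih =>
      intro X hle hX hπX
      by_cases h0 : lowW d X = 0
      · unfold muF; rw [h0]; simp
      · obtain ⟨i, hi0, hid, hXi⟩ := exists_low d X h0
        obtain ⟨hYS, hYπ⟩ := supp_closed n d lam hlam0 π hprob hstat X hX hπX i hi0 hXi
        have hlowY : lowW d X = lowW d (X - Pi.single i 1) + i.1 := by
          have h' := lowW_sub d X i (by omega)
          rwa [if_pos hid] at h'
        have hY := ih (X - Pi.single i 1) (by omega) hYS hYπ
        rw [← hmueq X hX hπX i hi0 hid hXi]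
        exact hY
  -- conclude
  unfold expec
  apply Finset.sum_nonpos
  intro X hX
  dsimp only
  rcases (hprob.1 X).eq_or_lt with h0 | hπX
  · rw [← h0, zero_mul]
  by_cases hind : (1 : ℝ) - d / n < (busy d X : ℝ) / n
  · rw [if_pos hind, one_mul]
    have hn0 : (0 : ℝ) < n := by exact_mod_cast hn
    apply mul_nonpos_iff.mpr
    left
    refine ⟨hπX.le, ?_⟩
    have hbusy : (n : ℝ) - d < (busy d X : ℝ) := by
      have h1 := mul_lt_mul_of_pos_right hind hn0
      have h2 : ((1 : ℝ) - ↑d / ↑n) * ↑n = ↑n - ↑d := by field_simp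
      have h3 : ((busy d X : ℝ) / ↑n) * ↑n = (busy d X : ℝ) := by field_simp
      rw [h2, h3] at h1
      exact h1
    have hmuX : muF n d X = n % d := hmu (lowW d X) X le_rfl hX hπX
    have hlow : (lowW d X : ℝ) ≤ (d : ℝ) - 1 := by
      have h2 : lowW d X ≤ n % d := by
        unfold muF at hmuX; omega
      have h3 : n % d < d := Nat.mod_lt n (by omega)
      have h4 : lowW d X + 1 ≤ d := by omega
      have := (Nat.cast_le (α := ℝ)).mpr h4
      push_cast at this
      linarith
    have hdecomp : (busy d X : ℝ) = (lowW d X : ℝ) + (d : ℝ) * (X (Fin.last d) : ℝ) := by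
      have := busy_eq_lowW d X
      exact_mod_cast congrArg (Nat.cast : ℕ → ℝ) this
    have hXd : (n : ℝ) - 2 * d + 1 < (d : ℝ) * (X (Fin.last d) : ℝ) := by
      linarith
    have hpow : (n : ℝ) ^ ((1 : ℝ) - α) = (n : ℝ) * (n : ℝ) ^ (-α) := by
      rw [show (1 : ℝ) - α = 1 + (-α) by ring, Real.rpow_add hn0, Real.rpow_one]
    have hlamn : lam * n ≤ (n : ℝ) - 2 * d := by
      have h' : 2 * (d : ℝ) ≤ β * ((n : ℝ) * (n : ℝ) ^ (-α)) := by
        rwa [hpow] at hlarge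
      rw [hlam]
      nlinarith
    rw [sub_nonpos, le_div_iff₀ hn0]
    linarith
  · rw [if_neg hind, zero_mul, mul_zero]
end

section
/- Suppose λ = 1 − β·n^{−α} with α ∈ [0,1), β > 0, β·n^{1−α} ≥ 2d, and n·λ > d. Let π be any stationary distribution of the greedy full-access chain, let P_b := E_π[1(I(X) = 0)] (which satisfies P_b < 1), and define the steady-state mean response time of accepted jobs via Little's law as E[D] := E_π[Σ_{i=1}^d X_i] / (n·λ·(1 − P_b)). Then 1/d ≤ E[D] ≤ 1/d + 1/(n·λ·(1 − P_b)). (Theorem 1, mean-response-time bound.) -/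
open Finset

namespace Stmt8Aux


variable {n d : ℕ}

lemma mem_stateSpace_iff {X : Fin (d+1) → ℕ} :
    X ∈ stateSpace n d ↔ (∀ i, X i ≤ n) ∧ busy d X ≤ n ∧ X 0 = 0 := by
  simp [stateSpace, Fintype.mem_piFinset, Nat.lt_succ_iff]

lemma busy_add (X : Fin (d+1) → ℕ) (j : Fin (d+1)) :
    busy d (X + Pi.single j 1) = busy d X + j.1 := by
  simp only [busy, Pi.add_apply, mul_add, Finset.sum_add_distrib]
  congr 1
  simp [Pi.single_apply, mul_ite, Finset.sum_ite_eq']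

lemma jobs_add (X : Fin (d+1) → ℕ) (j : Fin (d+1)) :
    jobs d (X + Pi.single j 1) = jobs d X + (if 0 < j.1 then 1 else 0) := by
  have h : ∀ i : Fin (d+1), (if 0 < i.1 then (X + (Pi.single j 1 : Fin (d+1) → ℕ)) i else 0)
      = (if 0 < i.1 then X i else 0) + (if 0 < i.1 then (Pi.single j 1 : Fin (d+1) → ℕ) i else 0) := by
    intro i; split <;> simp
  simp only [jobs, h, Finset.sum_add_distrib]
  congr 1
  have h2 : ∀ i : Fin (d+1), (if 0 < i.1 then (Pi.single j 1 : Fin (d+1) → ℕ) i else 0)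
      = if i = j then (if 0 < j.1 then 1 else 0) else 0 := by
    intro i
    by_cases hij : i = j <;> simp [Pi.single_apply, hij]
  simp only [h2]
  simp [Finset.sum_ite_eq']

lemma jobsLow_add (X : Fin (d+1) → ℕ) (j : Fin (d+1)) :
    jobsLow d (X + Pi.single j 1) = jobsLow d X + (if 0 < j.1 ∧ j.1 < d then 1 else 0) := by
  have h : ∀ i : Fin (d+1), (if 0 < i.1 ∧ i.1 < d then (X + (Pi.single j 1 : Fin (d+1) → ℕ)) i else 0)
      = (if 0 < i.1 ∧ i.1 < d then X i else 0) + (if 0 < i.1 ∧ i.1 < d then (Pi.single j 1 : Fin (d+1) → ℕ) i else 0) := by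
    intro i; split <;> simp
  simp only [jobsLow, h, Finset.sum_add_distrib]
  congr 1
  have h2 : ∀ i : Fin (d+1), (if 0 < i.1 ∧ i.1 < d then (Pi.single j 1 : Fin (d+1) → ℕ) i else 0)
      = if i = j then (if 0 < j.1 ∧ j.1 < d then 1 else 0) else 0 := by
    intro i
    by_cases hij : i = j <;> simp [Pi.single_apply, hij]
  simp only [h2]
  simp [Finset.sum_ite_eq']

lemma sub_add_single {X : Fin (d+1) → ℕ} {j : Fin (d+1)} (h : 0 < X j) :
    (X - Pi.single j 1) + Pi.single j 1 = X := by
  funext i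
  by_cases hij : i = j
  · subst hij
    simp only [Pi.add_apply, Pi.sub_apply, Pi.single_eq_same]
    omega
  · simp [Pi.single_apply, hij]


lemma busy_sub {X : Fin (d+1) → ℕ} {j : Fin (d+1)} (h : 0 < X j) :
    busy d (X - Pi.single j 1) + j.1 = busy d X := by
  conv_rhs => rw [← sub_add_single h]
  rw [busy_add]

lemma jobs_sub {X : Fin (d+1) → ℕ} {j : Fin (d+1)} (h : 0 < X j) (hj : 0 < j.1) :
    jobs d (X - Pi.single j 1) + 1 = jobs d X := by
  conv_rhs => rw [← sub_add_single h]
  rw [jobs_add, if_pos hj]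

lemma jobsLow_sub {X : Fin (d+1) → ℕ} {j : Fin (d+1)} (h : 0 < X j) :
    jobsLow d (X - Pi.single j 1) + (if 0 < j.1 ∧ j.1 < d then 1 else 0) = jobsLow d X := by
  conv_rhs => rw [← sub_add_single h]
  rw [jobsLow_add]

lemma term_le_busy (X : Fin (d+1) → ℕ) (j : Fin (d+1)) : j.1 * X j ≤ busy d X :=
  Finset.single_le_sum (f := fun i : Fin (d+1) => i.1 * X i)
    (fun i _ => Nat.zero_le _) (Finset.mem_univ j)

lemma term_le_jobs (X : Fin (d+1) → ℕ) (j : Fin (d+1)) (hj : 0 < j.1) : X j ≤ jobs d X := by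
  have := Finset.single_le_sum (f := fun i : Fin (d+1) => if 0 < i.1 then X i else 0)
    (fun i _ => Nat.zero_le _) (Finset.mem_univ j)
  simpa [hj, jobs] using this

lemma term_le_jobsLow (X : Fin (d+1) → ℕ) (j : Fin (d+1)) (hj : 0 < j.1 ∧ j.1 < d) :
    X j ≤ jobsLow d X := by
  have := Finset.single_le_sum (f := fun i : Fin (d+1) => if 0 < i.1 ∧ i.1 < d then X i else 0)
    (fun i _ => Nat.zero_le _) (Finset.mem_univ j)
  simpa [hj, jobsLow] using this

lemma mem_S_add {X : Fin (d+1) → ℕ} (hX : X ∈ stateSpace n d) {j : Fin (d+1)}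
    (hj : 0 < j.1) (hb : busy d X + j.1 ≤ n) :
    X + Pi.single j 1 ∈ stateSpace n d := by
  obtain ⟨hle, hbn, h0⟩ := mem_stateSpace_iff.mp hX
  refine mem_stateSpace_iff.mpr ⟨?_, by rw [busy_add]; exact hb, ?_⟩
  · intro i
    by_cases hij : i = j
    · subst hij
      have h1 : i.1 * (X i + 1) ≤ busy d (X + Pi.single i 1) := by
        have := term_le_busy (X + Pi.single i 1) i
        simpa using this
      have h2 : i.1 * (X i + 1) ≤ n := le_trans h1 (by rw [busy_add]; exact hb)
      have h3 : X i + 1 ≤ i.1 * (X i + 1) := Nat.le_mul_of_pos_left _ hj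
      simpa using le_trans h3 h2
    · simp [Pi.single_apply, hij, hle i]
  · have hj0 : (0 : Fin (d+1)) ≠ j := by
      intro h; rw [← h] at hj; simp at hj
    simp [Pi.single_apply, hj0, h0]

lemma mem_S_sub {X : Fin (d+1) → ℕ} (hX : X ∈ stateSpace n d) (j : Fin (d+1)) :
    X - Pi.single j 1 ∈ stateSpace n d := by
  obtain ⟨hle, hbn, h0⟩ := mem_stateSpace_iff.mp hX
  refine mem_stateSpace_iff.mpr ⟨fun i => le_trans (Nat.sub_le _ _) (hle i), ?_, ?_⟩
  · refine le_trans ?_ hbn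
    unfold busy
    exact Finset.sum_le_sum fun i _ => Nat.mul_le_mul_left _ (Nat.sub_le _ _)
  · simp [h0]

lemma busy_le_d_jobs (X : Fin (d+1) → ℕ) : busy d X ≤ d * jobs d X := by
  rw [jobs, Finset.mul_sum]
  refine Finset.sum_le_sum fun i _ => ?_
  rcases Nat.eq_zero_or_pos i.1 with h | h
  · simp [h]
  · rw [if_pos h]
    exact Nat.mul_le_mul_right _ i.is_le

lemma d_jobs_le (X : Fin (d+1) → ℕ) (hd : 1 ≤ d) :
    d * jobs d X ≤ busy d X + (d - 1) * jobsLow d X := by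
  rw [jobs, Finset.mul_sum, busy, jobsLow, Finset.mul_sum, ← Finset.sum_add_distrib]
  refine Finset.sum_le_sum fun i _ => ?_
  rcases Nat.eq_zero_or_pos i.1 with h | h
  · simp [h]
  · rw [if_pos h]
    by_cases hlt : i.1 < d
    · rw [if_pos ⟨h, hlt⟩]
      calc d * X i ≤ (i.1 + (d-1)) * X i := Nat.mul_le_mul_right _ (by omega)
        _ = i.1 * X i + (d-1) * X i := by ring
    · have : i.1 = d := by have := i.is_le; omega
      rw [if_neg (by omega)]
      simp [this]

def Cset (n d : ℕ) (X : Fin (d+1) → ℕ) : Prop :=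
  jobsLow d X ≤ 1 ∧ (jobsLow d X = 1 → busy d X % d = n % d)

instance (n d : ℕ) : DecidablePred (Cset n d) := fun X => by
  unfold Cset; infer_instance

lemma exists_small {X : Fin (d+1) → ℕ} (h : ¬ Cset n d X) :
    ∃ i : Fin (d+1), 0 < i.1 ∧ i.1 < d ∧ 0 < X i := by
  have hL : 1 ≤ jobsLow d X := by
    by_contra hc
    exact h ⟨by omega, by omega⟩
  have : jobsLow d X ≠ 0 := by omega
  rw [jobsLow] at this
  obtain ⟨i, _, hi⟩ := Finset.exists_ne_zero_of_sum_ne_zero this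
  by_cases hc : 0 < i.1 ∧ i.1 < d
  · exact ⟨i, hc.1, hc.2, by rw [if_pos hc] at hi; omega⟩
  · rw [if_neg hc] at hi; omega


lemma Cset_add_last (hd : 1 ≤ d) {X : Fin (d+1) → ℕ} (hC : Cset n d X) :
    Cset n d (X + Pi.single (Fin.last d) 1) := by
  obtain ⟨h1, h2⟩ := hC
  have hval : (Fin.last d).1 = d := rfl
  have hL : jobsLow d (X + Pi.single (Fin.last d) 1) = jobsLow d X := by
    rw [jobsLow_add, hval, if_neg (by omega)]; omega
  have hB : busy d (X + Pi.single (Fin.last d) 1) = busy d X + d := by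
    rw [busy_add, hval]
  refine ⟨by rw [hL]; exact h1, fun hone => ?_⟩
  rw [hL] at hone
  rw [hB, Nat.add_mod_right]
  exact h2 hone

lemma Cset_add_small (hd : 1 ≤ d) {X : Fin (d+1) → ℕ} (hX : X ∈ stateSpace n d)
    (hC : Cset n d X) {j : Fin (d+1)} (hj0 : 0 < j.1) (hjd : j.1 < d)
    (hI : n - busy d X = j.1) :
    Cset n d (X + Pi.single j 1) := by
  obtain ⟨h1, h2⟩ := hC
  obtain ⟨_, hbn, _⟩ := mem_stateSpace_iff.mp hX
  have hLz : jobsLow d X = 0 := by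
    rcases Nat.lt_or_ge (jobsLow d X) 1 with h | h
    · omega
    · exfalso
      have hone : jobsLow d X = 1 := by omega
      have hmod := h2 hone
      -- busy ≡ n mod d and n - busy = j.1 with 0 < j.1 < d : contradiction
      have hsum : busy d X + j.1 = n := by omega
      have : n % d = (busy d X + j.1) % d := by rw [hsum]
      rw [Nat.add_mod, ← hmod] at this
      have hbmod : busy d X % d < d := Nat.mod_lt _ (by omega)
      have hjm : j.1 % d = j.1 := Nat.mod_eq_of_lt hjd
      rw [hjm] at this
      rcases Nat.lt_or_ge (busy d X % d + j.1) d with hc | hc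
      · rw [Nat.mod_eq_of_lt hc] at this; omega
      · have h2d : busy d X % d + j.1 - d < d := by omega
        rw [Nat.mod_eq_sub_mod hc, Nat.mod_eq_of_lt h2d] at this
        omega
  have hL : jobsLow d (X + Pi.single j 1) = 1 := by
    rw [jobsLow_add, if_pos ⟨hj0, hjd⟩, hLz]
  have hB : busy d (X + Pi.single j 1) = n := by
    rw [busy_add]; omega
  exact ⟨le_of_eq hL, fun _ => by rw [hB]⟩

lemma Cset_sub (hd : 1 ≤ d) {X : Fin (d+1) → ℕ} (hC : Cset n d X) {i : Fin (d+1)}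
    (hi0 : 0 < i.1) (hXi : 0 < X i) :
    Cset n d (X - Pi.single i 1) := by
  obtain ⟨h1, h2⟩ := hC
  by_cases hlt : i.1 < d
  · -- removing a small job: jobsLow goes to 0
    have hXL : 1 ≤ jobsLow d X := le_trans hXi (term_le_jobsLow X i ⟨hi0, hlt⟩)
    have hL := jobsLow_sub (d := d) hXi
    rw [if_pos ⟨hi0, hlt⟩] at hL
    have : jobsLow d (X - Pi.single i 1) = 0 := by omega
    exact ⟨by omega, by omega⟩
  · -- removing a d-job
    have hid : i.1 = d := by have := i.is_le; omega
    have hL := jobsLow_sub (d := d) hXi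
    rw [if_neg (by omega)] at hL
    have hB := busy_sub (d := d) hXi
    refine ⟨by omega, fun hone => ?_⟩
    have := h2 (by omega)
    have : busy d (X - Pi.single i 1) % d = busy d X % d := by
      have : busy d X = busy d (X - Pi.single i 1) + d := by omega
      rw [this, Nat.add_mod_right]
    omega


variable {lam : ℝ}

lemma Gfull_nonpos (hnl : 0 ≤ (n:ℝ) * lam) (f : (Fin (d+1) → ℕ) → ℝ)
    (hf1 : ∀ Y, f Y ≤ 1) {X : Fin (d+1) → ℕ} (hfx : f X = 1) :
    Gfull n d lam f X ≤ 0 := by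
  have h1 : ∀ Y, f Y - f X ≤ 0 := fun Y => by rw [hfx]; linarith [hf1 Y]
  have hind : ∀ (P : Prop) [Decidable P], (0:ℝ) ≤ if P then (1:ℝ) else 0 := by
    intro P _; split <;> norm_num
  unfold Gfull
  apply add_nonpos
  · apply mul_nonpos_iff.mpr
    left
    refine ⟨hnl, ?_⟩
    apply add_nonpos
    · exact mul_nonpos_iff.mpr (Or.inl ⟨hind _, h1 _⟩)
    · exact Finset.sum_nonpos fun j _ => mul_nonpos_iff.mpr (Or.inl ⟨hind _, h1 _⟩)
  · exact Finset.sum_nonpos fun i _ => mul_nonpos_iff.mpr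
      (Or.inl ⟨by positivity, h1 _⟩)

lemma Gfull_extract (hnl : 0 ≤ (n:ℝ) * lam) (f : (Fin (d+1) → ℕ) → ℝ)
    (hf1 : ∀ Y, f Y ≤ 1) {X : Fin (d+1) → ℕ} (hfx : f X = 1)
    (hG : Gfull n d lam f X = 0) (i : Fin (d+1)) (hip : 0 < i.1) (hXi : 0 < X i) :
    f (X - Pi.single i 1) = 1 := by
  have h1 : ∀ Y, f Y - f X ≤ 0 := fun Y => by rw [hfx]; linarith [hf1 Y]
  have hind : ∀ (P : Prop) [Decidable P], (0:ℝ) ≤ if P then (1:ℝ) else 0 := by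
    intro P _; split <;> norm_num
  have hA : (n:ℝ) * lam *
      ((if d ≤ n - busy d X then (1 : ℝ) else 0) *
          (f (X + Pi.single (Fin.last d) 1) - f X) +
        ∑ j : Fin (d + 1),
          (if 0 < j.1 ∧ j.1 < d ∧ n - busy d X = j.1 then (1 : ℝ) else 0) *
            (f (X + Pi.single j 1) - f X)) ≤ 0 := by
    apply mul_nonpos_iff.mpr
    left
    refine ⟨hnl, ?_⟩
    apply add_nonpos
    · exact mul_nonpos_iff.mpr (Or.inl ⟨hind _, h1 _⟩)
    · exact Finset.sum_nonpos fun j _ => mul_nonpos_iff.mpr (Or.inl ⟨hind _, h1 _⟩)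
  have hT : ∀ j ∈ Finset.univ, ((j : Fin (d+1)).1 * X j : ℝ) * (f (X - Pi.single j 1) - f X) ≤ 0 :=
    fun j _ => mul_nonpos_iff.mpr (Or.inl ⟨by positivity, h1 _⟩)
  have hsum0 : ∑ j : Fin (d+1), ((j:Fin (d+1)).1 * X j : ℝ) * (f (X - Pi.single j 1) - f X) = 0 := by
    have hle : ∑ j : Fin (d+1), ((j:Fin (d+1)).1 * X j : ℝ) * (f (X - Pi.single j 1) - f X) ≤ 0 :=
      Finset.sum_nonpos hT
    unfold Gfull at hG
    linarith
  have hterm := (Finset.sum_eq_zero_iff_of_nonpos hT).1 hsum0 i (Finset.mem_univ i)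
  have hc : (0:ℝ) < (i.1 : ℝ) * (X i : ℝ) := by
    have : (0:ℝ) < (i.1 : ℝ) := by exact_mod_cast hip
    have h2 : (0:ℝ) < (X i : ℝ) := by exact_mod_cast hXi
    positivity
  have hz : f (X - Pi.single i 1) - f X = 0 := by
    rcases mul_eq_zero.mp hterm with h | h
    · exact absurd h (ne_of_gt hc)
    · exact h
  rw [hfx] at hz
  linarith


lemma mem_S_add_last {X : Fin (d+1) → ℕ} (hd : 1 ≤ d) (hX : X ∈ stateSpace n d)
    (h : d ≤ n - busy d X) : X + Pi.single (Fin.last d) 1 ∈ stateSpace n d := by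
  obtain ⟨_, hbn, _⟩ := mem_stateSpace_iff.mp hX
  exact mem_S_add hX (by simp [Fin.last]; omega) (by simp [Fin.last]; omega)

lemma Gfull_onC (hd : 1 ≤ d) {X : Fin (d+1) → ℕ} (hX : X ∈ stateSpace n d)
    (hC : Cset n d X) :
    Gfull n d lam (fun Y => if Cset n d Y then (0:ℝ) else 1) X = 0 := by
  obtain ⟨_, hbn, _⟩ := mem_stateSpace_iff.mp hX
  unfold Gfull
  have hfx : (if Cset n d X then (0:ℝ) else 1) = 0 := if_pos hC
  have h1 : (if d ≤ n - busy d X then (1 : ℝ) else 0) *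
      ((if Cset n d (X + Pi.single (Fin.last d) 1) then (0:ℝ) else 1)
        - (if Cset n d X then (0:ℝ) else 1)) = 0 := by
    by_cases h : d ≤ n - busy d X
    · rw [if_pos (Cset_add_last hd hC), hfx]; ring
    · rw [if_neg h]; ring
  have h2 : ∀ j : Fin (d+1),
      (if 0 < j.1 ∧ j.1 < d ∧ n - busy d X = j.1 then (1 : ℝ) else 0) *
        ((if Cset n d (X + Pi.single j 1) then (0:ℝ) else 1)
          - (if Cset n d X then (0:ℝ) else 1)) = 0 := by
    intro j
    by_cases h : 0 < j.1 ∧ j.1 < d ∧ n - busy d X = j.1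
    · rw [if_pos (Cset_add_small hd hX hC h.1 h.2.1 h.2.2), hfx]; ring
    · rw [if_neg h]; ring
  have h3 : ∀ i : Fin (d+1), ((i:Fin (d+1)).1 * X i : ℝ) *
      ((if Cset n d (X - Pi.single i 1) then (0:ℝ) else 1)
        - (if Cset n d X then (0:ℝ) else 1)) = 0 := by
    intro i
    rcases Nat.eq_zero_or_pos i.1 with h | h
    · rw [h]; norm_num
    rcases Nat.eq_zero_or_pos (X i) with h' | h'
    · rw [h']; norm_num
    · rw [if_pos (Cset_sub hd hC h h'), hfx]; ring
  rw [h1]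
  rw [Finset.sum_congr rfl fun j _ => h2 j, Finset.sum_congr rfl fun i _ => h3 i]
  simp


lemma Gfull_jobs (hd : 1 ≤ d) (X : Fin (d+1) → ℕ) :
    Gfull n d lam (fun Y => (jobs d Y : ℝ)) X
      = (n:ℝ) * lam * (if 1 ≤ n - busy d X then (1:ℝ) else 0) - (busy d X : ℝ) := by
  have hA : ((jobs d (X + Pi.single (Fin.last d) 1) : ℝ) - (jobs d X : ℝ)) = 1 := by
    rw [jobs_add]
    rw [if_pos (by simp [Fin.last]; omega)]
    push_cast
    ring
  have h2 : ∀ j : Fin (d+1),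
      (if 0 < j.1 ∧ j.1 < d ∧ n - busy d X = j.1 then (1 : ℝ) else 0) *
        ((jobs d (X + Pi.single j 1) : ℝ) - (jobs d X : ℝ))
      = if 0 < j.1 ∧ j.1 < d ∧ n - busy d X = j.1 then (1:ℝ) else 0 := by
    intro j
    by_cases h : 0 < j.1 ∧ j.1 < d ∧ n - busy d X = j.1
    · rw [if_pos h, jobs_add, if_pos h.1]
      push_cast
      ring
    · rw [if_neg h]; ring
  have hsum2 : (∑ j : Fin (d+1),
      (if 0 < j.1 ∧ j.1 < d ∧ n - busy d X = j.1 then (1 : ℝ) else 0))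
      = if 0 < n - busy d X ∧ n - busy d X < d then (1:ℝ) else 0 := by
    by_cases hI : 0 < n - busy d X ∧ n - busy d X < d
    · have hiff : ∀ j : Fin (d+1), (0 < j.1 ∧ j.1 < d ∧ n - busy d X = j.1)
          ↔ j = (⟨n - busy d X, by omega⟩ : Fin (d+1)) := by
        intro j
        constructor
        · intro h; exact Fin.ext (by simp; omega)
        · intro h; subst h; simpa using hI
      rw [Finset.sum_congr rfl fun j _ => if_congr (hiff j) rfl rfl]
      rw [Finset.sum_ite_eq' Finset.univ]
      simp [hI]
    · rw [if_neg hI]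
      apply Finset.sum_eq_zero
      intro j _
      rw [if_neg]
      intro h
      exact hI ⟨by omega, by omega⟩
  have h3 : ∀ i : Fin (d+1), ((i:Fin (d+1)).1 * X i : ℝ) *
      ((jobs d (X - Pi.single i 1) : ℝ) - (jobs d X : ℝ))
      = -((i.1 : ℝ) * (X i : ℝ)) := by
    intro i
    rcases Nat.eq_zero_or_pos i.1 with h | h
    · rw [h]; norm_num
    rcases Nat.eq_zero_or_pos (X i) with h' | h'
    · rw [h']; norm_num
    · have := jobs_sub (d := d) h' h
      have hcast : (jobs d (X - Pi.single i 1) : ℝ) = (jobs d X : ℝ) - 1 := by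
        have : ((jobs d (X - Pi.single i 1) + 1 : ℕ) : ℝ) = (jobs d X : ℝ) := by
          exact_mod_cast congrArg (Nat.cast : ℕ → ℝ) this
        push_cast at this
        linarith
      rw [hcast]
      ring
  unfold Gfull
  rw [hA, Finset.sum_congr rfl fun j _ => h2 j, hsum2,
    Finset.sum_congr rfl fun i _ => h3 i]
  have hbusy : (∑ i : Fin (d+1), -((i.1 : ℝ) * (X i : ℝ))) = -(busy d X : ℝ) := by
    rw [busy]
    push_cast
    rw [← Finset.sum_neg_distrib]
  rw [hbusy]
  have hind : (if d ≤ n - busy d X then (1:ℝ) else 0) * 1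
      + (if 0 < n - busy d X ∧ n - busy d X < d then (1:ℝ) else 0)
      = (if 1 ≤ n - busy d X then (1:ℝ) else 0) := by
    rcases Nat.lt_or_ge (n - busy d X) 1 with h | h
    · rw [if_neg (by omega), if_neg (by omega), if_neg (by omega)]; ring
    rcases Nat.lt_or_ge (n - busy d X) d with h' | h'
    · rw [if_neg (by omega), if_pos (by omega), if_pos (by omega)]; ring
    · rw [if_pos (by omega), if_neg (by omega), if_pos (by omega)]; ring
  rw [hind]
  ring


lemma support_subset_C (hd : 1 ≤ d) (hnl0 : 0 ≤ (n:ℝ)*lam)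
    {π : (Fin (d+1) → ℕ) → ℝ}
    (hprob : IsProbOn n d π) (hstat : IsStationaryFull n d lam π) :
    ∀ X, π X ≠ 0 → Cset n d X := by
  classical
  obtain ⟨hpos, hsum, hsupp⟩ := hprob
  set f1 : (Fin (d+1) → ℕ) → ℝ := fun Y => if π Y = 0 then 0 else 1 with hf1def
  have hf1le : ∀ Y, f1 Y ≤ 1 := fun Y => by simp only [hf1def]; split <;> norm_num
  have h1np : ∀ X ∈ stateSpace n d, π X * Gfull n d lam f1 X ≤ 0 := by
    intro X _
    by_cases h : π X = 0
    · rw [h]; simp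
    · exact mul_nonpos_iff.mpr (Or.inl ⟨hpos X,
        Gfull_nonpos hnl0 f1 hf1le (by simp [hf1def, h])⟩)
  have h1z := (Finset.sum_eq_zero_iff_of_nonpos h1np).1 (hstat f1)
  set f2 : (Fin (d+1) → ℕ) → ℝ := fun Y => if Cset n d Y then 0 else 1 with hf2def
  have hf2le : ∀ Y, f2 Y ≤ 1 := fun Y => by simp only [hf2def]; split <;> norm_num
  have h2np : ∀ X ∈ stateSpace n d, π X * Gfull n d lam f2 X ≤ 0 := by
    intro X hX
    by_cases h : Cset n d X
    · rw [show Gfull n d lam f2 X = 0 from Gfull_onC hd hX h]; simp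
    · exact mul_nonpos_iff.mpr (Or.inl ⟨hpos X,
        Gfull_nonpos hnl0 f2 hf2le (by simp [hf2def, h])⟩)
  have h2z := (Finset.sum_eq_zero_iff_of_nonpos h2np).1 (hstat f2)
  suffices H : ∀ m X, jobs d X ≤ m → π X ≠ 0 → Cset n d X by
    intro X hX; exact H (jobs d X) X le_rfl hX
  intro m
  induction m with
  | zero =>
    intro X hm hX
    by_contra hC
    obtain ⟨i, hi0, hid, hXi⟩ := exists_small hC
    have := term_le_jobs X i hi0
    omega
  | succ m ih =>
    intro X hm hX
    by_contra hC
    obtain ⟨i, hi0, hid, hXi⟩ := exists_small hC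
    have hXS : X ∈ stateSpace n d := by
      by_contra h; exact hX (hsupp X h)
    have hG1 : Gfull n d lam f1 X = 0 := by
      rcases mul_eq_zero.mp (h1z X hXS) with h | h
      · exact absurd h hX
      · exact h
    have hG2 : Gfull n d lam f2 X = 0 := by
      rcases mul_eq_zero.mp (h2z X hXS) with h | h
      · exact absurd h hX
      · exact h
    have hnext1 : f1 (X - Pi.single i 1) = 1 :=
      Gfull_extract hnl0 f1 hf1le (by simp [hf1def, hX]) hG1 i hi0 hXi
    have hnext2 : f2 (X - Pi.single i 1) = 1 :=
      Gfull_extract hnl0 f2 hf2le (by simp [hf2def, hC]) hG2 i hi0 hXi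
    have hpi' : π (X - Pi.single i 1) ≠ 0 := by
      intro h; simp [hf1def, h] at hnext1
    have hC' : ¬ Cset n d (X - Pi.single i 1) := by
      intro h; simp [hf2def, h] at hnext2
    have hjle : jobs d (X - Pi.single i 1) ≤ m := by
      have h1 := jobs_sub (d := d) hXi hi0
      omega
    exact hC' (ih _ hjle hpi')

end Stmt8Aux

open Stmt8Aux in
/-- Theorem 1, mean-response-time bound: if `λ = 1 − β·n^{−α}` with `α ∈ [0,1)`, `β > 0`,
`β·n^{1−α} ≥ 2d` and `n·λ > d`, then for any stationary distribution `π` of the greedy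
full-access chain, the blocking probability `P_b = E[1(I(X) = 0)]` satisfies `P_b < 1`,
and the mean response time `E[D] = E[∑_{i=1}^d X_i]/(n·λ·(1 − P_b))` satisfies
`1/d ≤ E[D] ≤ 1/d + 1/(n·λ·(1 − P_b))`. -/
theorem stmt8 (n d : ℕ) (hn : 1 ≤ n) (hd : 1 ≤ d) (hdn : d ≤ n) (α β lam : ℝ)
    (hα0 : 0 ≤ α) (hα1 : α < 1) (hβ : 0 < β)
    (hlam : lam = 1 - β * (n : ℝ) ^ (-α)) (hlarge : 2 * d ≤ β * (n : ℝ) ^ (1 - α))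
    (hnl : (d : ℝ) < n * lam) (hlam0 : 0 ≤ lam) (hlam1 : lam ≤ 1)
    (π : (Fin (d + 1) → ℕ) → ℝ)
    (hprob : IsProbOn n d π) (hstat : IsStationaryFull n d lam π) :
    expec n d π (fun X => if n - busy d X = 0 then (1 : ℝ) else 0) < 1 ∧
      ∀ Pb ED : ℝ,
        Pb = expec n d π (fun X => if n - busy d X = 0 then (1 : ℝ) else 0) →
        ED = expec n d π (fun X => (jobs d X : ℝ)) / (n * lam * (1 - Pb)) →
        1 / d ≤ ED ∧ ED ≤ 1 / d + 1 / (n * lam * (1 - Pb)) := by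
  have hd0 : (0:ℝ) < d := by exact_mod_cast hd
  have hn1 : (1:ℝ) ≤ n := by exact_mod_cast hn
  have hnlam : (0:ℝ) < (n:ℝ) * lam := lt_trans hd0 hnl
  have hpos := hprob.1
  have hsum1 := hprob.2.1
  set Pb := expec n d π (fun X => if n - busy d X = 0 then (1 : ℝ) else 0) with hPbdef
  set Ej := expec n d π (fun X => (jobs d X : ℝ)) with hEjdef
  set Eb := ∑ X ∈ stateSpace n d, π X * (busy d X : ℝ) with hEbdef
  -- key stationarity identity
  have h0 := hstat (fun Y => (jobs d Y : ℝ))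
  have hterm : ∀ X ∈ stateSpace n d,
      π X * Gfull n d lam (fun Y => (jobs d Y : ℝ)) X
        = ((n:ℝ)*lam*(π X - π X * (if n - busy d X = 0 then (1:ℝ) else 0))
          - π X * (busy d X : ℝ)) := by
    intro X _
    rw [Gfull_jobs hd]
    rcases Nat.eq_zero_or_pos (n - busy d X) with h | h
    · rw [if_neg (show ¬ 1 ≤ n - busy d X by omega),
        if_pos (show n - busy d X = 0 by omega)]; ring
    · rw [if_pos (show 1 ≤ n - busy d X by omega),
        if_neg (show ¬ n - busy d X = 0 by omega)]; ring
  rw [Finset.sum_congr rfl hterm, Finset.sum_sub_distrib, ← Finset.mul_sum,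
    Finset.sum_sub_distrib, hsum1] at h0
  have hkey : (n:ℝ)*lam*(1 - Pb) = Eb := by
    rw [hPbdef, hEbdef, expec]
    linarith [h0]
  have hPb0 : 0 ≤ Pb := by
    rw [hPbdef, expec]
    apply Finset.sum_nonneg
    intro X _
    apply mul_nonneg (hpos X)
    split <;> norm_num
  have hEb_ge : (n:ℝ) * Pb ≤ Eb := by
    rw [hPbdef, hEbdef, expec, Finset.mul_sum]
    apply Finset.sum_le_sum
    intro X hX
    obtain ⟨_, hbn, _⟩ := mem_stateSpace_iff.mp hX
    by_cases h : n - busy d X = 0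
    · have hb : busy d X = n := by omega
      rw [if_pos h, hb]
      ring_nf
      exact le_refl _
    · rw [if_neg h]
      have : (0:ℝ) ≤ π X * (busy d X : ℝ) := mul_nonneg (hpos X) (by positivity)
      linarith
  have hPb1 : Pb < 1 := by
    by_contra hcon
    push_neg at hcon
    have h1 : Eb ≤ 0 := by
      rw [← hkey]
      apply mul_nonpos_iff.mpr
      exact Or.inl ⟨le_of_lt hnlam, by linarith⟩
    nlinarith
  have hD : 0 < (n:ℝ)*lam*(1 - Pb) := mul_pos hnlam (by linarith)
  refine ⟨hPb1, ?_⟩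
  intro Pb' ED hPb' hED
  subst hPb'
  -- lower bound on Ej
  have hEbEj : Eb ≤ (d:ℝ) * Ej := by
    rw [hEbdef, hEjdef, expec, Finset.mul_sum]
    apply Finset.sum_le_sum
    intro X _
    have h1 : (busy d X : ℝ) ≤ (d:ℝ) * (jobs d X : ℝ) := by
      exact_mod_cast busy_le_d_jobs X
    calc π X * (busy d X:ℝ) ≤ π X * ((d:ℝ) * (jobs d X : ℝ)) :=
          mul_le_mul_of_nonneg_left h1 (hpos X)
      _ = (d:ℝ) * (π X * (jobs d X : ℝ)) := by ring
  -- upper bound on Ej, using the support lemma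
  have hsupC := support_subset_C hd (le_of_lt hnlam) hprob hstat
  have hEjEb : (d:ℝ) * Ej ≤ Eb + ((d:ℝ) - 1) := by
    have hpt : ∀ X ∈ stateSpace n d,
        (d:ℝ) * (π X * (jobs d X : ℝ))
          ≤ π X * (busy d X : ℝ) + π X * ((d:ℝ)-1) := by
      intro X _
      by_cases h : π X = 0
      · rw [h]; simp
      · have hC := hsupC X h
        have hnat : d * jobs d X ≤ busy d X + (d - 1) := by
          have h1 := d_jobs_le X hd
          have h2 : (d-1) * jobsLow d X ≤ (d-1) * 1 := Nat.mul_le_mul_left _ hC.1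
          omega
        have hcast : (d:ℝ) * (jobs d X : ℝ) ≤ (busy d X : ℝ) + ((d:ℝ)-1) := by
          have := (Nat.cast_le (α := ℝ)).mpr hnat
          push_cast [Nat.cast_sub hd] at this
          linarith
        calc (d:ℝ)*(π X * (jobs d X:ℝ)) = π X * ((d:ℝ)*(jobs d X:ℝ)) := by ring
          _ ≤ π X * ((busy d X:ℝ) + ((d:ℝ)-1)) :=
              mul_le_mul_of_nonneg_left hcast (hpos X)
          _ = π X * (busy d X:ℝ) + π X * ((d:ℝ)-1) := by ring
    have h := Finset.sum_le_sum hpt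
    rw [Finset.sum_add_distrib, ← Finset.sum_mul, hsum1, ← Finset.mul_sum] at h
    rw [hEjdef, expec, hEbdef]
    linarith
  constructor
  · rw [hED, le_div_iff₀ hD]
    have : (1:ℝ)/(d:ℝ) * ((n:ℝ)*lam*(1-Pb)) = Eb / d := by rw [hkey]; ring
    rw [this, div_le_iff₀ hd0]
    calc Eb ≤ (d:ℝ) * Ej := hEbEj
      _ = Ej * d := by ring
  · rw [hED, div_le_iff₀ hD]
    have hexp : ((1:ℝ)/(d:ℝ) + 1/((n:ℝ)*lam*(1-Pb))) * ((n:ℝ)*lam*(1-Pb))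
        = Eb/(d:ℝ) + 1 := by
      have hlp : 0 < lam := by nlinarith
      have hne : lam * (1 - Pb) ≠ 0 := ne_of_gt (mul_pos hlp (by linarith))
      have hne2 : 1 - Pb ≠ 0 := by linarith
      rw [← hkey]
      field_simp
    rw [hexp]
    have : Ej ≤ (Eb + (d:ℝ))/(d:ℝ) := by
      rw [le_div_iff₀ hd0]
      calc Ej * (d:ℝ) = (d:ℝ) * Ej := by ring
        _ ≤ Eb + ((d:ℝ) - 1) := hEjEb
        _ ≤ Eb + (d:ℝ) := by linarith
    calc Ej ≤ (Eb + (d:ℝ))/(d:ℝ) := this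
      _ = Eb/(d:ℝ) + 1 := by field_simp
end
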